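/- arXiv:2104.11019 — 8 statements merged into one kernel-verified Lean document; each statement's English description precedes it below -/
import Mathlib

section
/- If D is an arc-locally in-semicomplete digraph, then D contains no induced non-oriented odd cycle of length at least five; that is, there is no set of at least five (an odd number of) vertices of D inducing a subdigraph that is not a directed cycle but whose underlying graph is a cycle. -/
variable {V : Type*}

/-- `u` and `v` are adjacent in the digraph with arc relation `A`. -/
def DAdj (A : V → V → Prop) (u v : V) : Prop := A u v ∨ A v u

/-- `A` is arc-locally in-semicomplete: for any four distinct vertices
`v1,v2,v3,v4` with `v1→v2`, `v2→v3`, `v4→v3`, the vertices `v1,v4` are adjacent. -/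
def ArcLocallyIn (A : V → V → Prop) : Prop :=
  ∀ v1 v2 v3 v4 : V, v1 ≠ v2 → v1 ≠ v3 → v1 ≠ v4 → v2 ≠ v3 → v2 ≠ v4 → v3 ≠ v4 →
    A v1 v2 → A v2 v3 → A v4 v3 → DAdj A v1 v4

/-- `A` is arc-locally out-semicomplete: for any four distinct vertices
`v1,v2,v3,v4` with `v2→v1`, `v2→v3`, `v3→v4`, the vertices `v1,v4` are adjacent. -/
def ArcLocallyOut (A : V → V → Prop) : Prop :=
  ∀ v1 v2 v3 v4 : V, v1 ≠ v2 → v1 ≠ v3 → v1 ≠ v4 → v2 ≠ v3 → v2 ≠ v4 → v3 ≠ v4 →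
    A v2 v1 → A v2 v3 → A v3 v4 → DAdj A v1 v4

/-- The underlying simple graph of the digraph `A`. -/
def Underlying (A : V → V → Prop) : SimpleGraph V := SimpleGraph.fromRel A

/-- A simple graph is perfect if every induced subgraph has chromatic number
equal to its clique number. -/
def GraphPerfect (G : SimpleGraph V) : Prop :=
  ∀ S : Set V, (G.induce S).chromaticNumber = ((G.induce S).cliqueNum : ℕ∞)

/-- A digraph is diperfect if its underlying graph is perfect. -/
def Diperfect (A : V → V → Prop) : Prop := GraphPerfect (Underlying A)

/-- The pairs of consecutive arcs `x ∈ S, y ∈ S, x→y` restricted to `S`. -/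
def ArcOn (A : V → V → Prop) (S : Set V) (x y : V) : Prop := x ∈ S ∧ y ∈ S ∧ A x y

/-- The induced subdigraph on `S` is strong. -/
def StrongOn (A : V → V → Prop) (S : Set V) : Prop :=
  ∀ u ∈ S, ∀ v ∈ S, Relation.ReflTransGen (ArcOn A S) u v

/-- `S` is (the vertex set of) a strong component: a maximal set inducing a
strong subdigraph. -/
def IsStrongComponent (A : V → V → Prop) (S : Set V) : Prop :=
  S.Nonempty ∧ StrongOn A S ∧ ∀ T : Set V, S ⊆ T → StrongOn A T → T ⊆ S

/-- The strong component `S` is initial: no outside vertex dominates a vertex of `S`. -/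
def IsInitial (A : V → V → Prop) (S : Set V) : Prop :=
  ∀ v, v ∉ S → ∀ u ∈ S, ¬ A v u

/-- The digraph is strong. -/
def IsStrong (A : V → V → Prop) : Prop := ∀ u v : V, Relation.ReflTransGen A u v

/-- There is a directed path from `u` to `v`. -/
def Reach (A : V → V → Prop) (u v : V) : Prop := Relation.ReflTransGen A u v

/-- The induced subdigraph on `S` is semicomplete. -/
def SemicompleteOn (A : V → V → Prop) (S : Set V) : Prop :=
  ∀ u ∈ S, ∀ v ∈ S, u ≠ v → DAdj A u v

/-- The induced subdigraph on `S` is bipartite (its underlying graph is 2-colorable). -/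
def BipartiteOn (A : V → V → Prop) (S : Set V) : Prop :=
  ∃ T : Set V, ∀ u ∈ S, ∀ v ∈ S, DAdj A u v →
    ((u ∈ T ∧ v ∉ T) ∨ (u ∉ T ∧ v ∈ T))

/-- The induced subdigraph on `S` is connected (in the underlying graph). -/
def ConnOn (A : V → V → Prop) (S : Set V) : Prop :=
  ∀ u ∈ S, ∀ v ∈ S,
    Relation.ReflTransGen (fun x y => x ∈ S ∧ y ∈ S ∧ DAdj A x y) u v

/-- The digraph is connected. -/
def IsConnected' (A : V → V → Prop) : Prop := ConnOn A Set.univ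

/-- `D` has a clique cut: a set `B` inducing a semicomplete subdigraph whose
removal disconnects the digraph. -/
def HasCliqueCut (A : V → V → Prop) : Prop :=
  ∃ B : Set V, SemicompleteOn A B ∧ ¬ ConnOn A Bᶜ

/-- The induced subdigraph on `S` is an extended cycle of length `k`:
`S` is partitioned into `k` nonempty (necessarily stable) sets `X 0, …, X (k-1)`
and the arcs between vertices of `S` are exactly those from `X i` to `X (i+1)`
(indices modulo `k`). -/
def IsExtendedCycleOn (A : V → V → Prop) (S : Set V) (k : ℕ) : Prop :=
  2 ≤ k ∧ ∃ X : ZMod k → Set V,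
    (∀ i, (X i).Nonempty) ∧
    (∀ i j, i ≠ j → Disjoint (X i) (X j)) ∧
    (⋃ i, X i) = S ∧
    (∀ u ∈ S, ∀ v ∈ S, (A u v ↔ ∃ i, u ∈ X i ∧ v ∈ X (i + 1)))

/-- The induced subdigraph on `S` is an odd extended cycle of length at least five. -/
def IsOddExtCycle5On (A : V → V → Prop) (S : Set V) : Prop :=
  ∃ k : ℕ, Odd k ∧ 5 ≤ k ∧ IsExtendedCycleOn A S k

/-!
Along an induced cycle `c 0, c 1, …` of length at least five, `c i` and `c (i + 3)` are
non-adjacent, so arc-local in-semicompleteness forbids `c i → c (i + 1)` together with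
`c (i + 3) → c (i + 2)`: whichever way the middle edge points, the quadruple would force
`c i` and `c (i + 3)` to be adjacent. Hence a forward arc at `i` forces a forward arc at `i + 2`,
and since `2` generates `ZMod n` for odd `n`, one forward arc makes every edge forward and no edge
backward. So the cycle is directed one way or the other.
-/

theorem ZMod.add_natCast_ne_add_natCast {n a b : ℕ} (i : ZMod n) (ha : a < n) (hb : b < n)
    (hab : a ≠ b) : i + a ≠ i + b := by
  rw [Ne, add_right_inj]
  intro h
  have := congrArg ZMod.val h
  rw [ZMod.val_cast_of_lt ha, ZMod.val_cast_of_lt hb] at this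
  exact hab this

theorem ZMod.forall_of_add_two {n : ℕ} (hn : Odd n) {P : ZMod n → Prop}
    (hP : ∀ i, P i → P (i + 2)) {i : ZMod n} (hi : P i) (j : ZMod n) : P j := by
  have : NeZero n := ⟨hn.pos.ne'⟩
  have hk : ∀ k : ℕ, P (i + k • 2) := by
    intro k
    induction k with
    | zero => simpa using hi
    | succ k ih => rw [succ_nsmul, ← add_assoc]; exact hP _ ih
  have h2 : (2 : ZMod n)⁻¹ * 2 = 1 := by
    rw [mul_comm]; exact_mod_cast ZMod.coe_mul_inv_eq_one 2 (Nat.coprime_two_left.2 hn)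
  simpa [nsmul_eq_mul, mul_assoc, h2] using hk ((j - i) * 2⁻¹).val

theorem ArcLocallyIn.false_of_arcs_into_middle {A : V → V → Prop} (hD : ArcLocallyIn A)
    {w₀ w₁ w₂ w₃ : V} (hw : [w₀, w₁, w₂, w₃].Nodup) (h₁₂ : DAdj A w₁ w₂)
    (h₀₃ : ¬ DAdj A w₀ w₃) (h₀₁ : A w₀ w₁) (h₃₂ : A w₃ w₂) : False := by
  simp only [List.nodup_cons, List.mem_cons, List.not_mem_nil, or_false, not_or] at hw
  obtain ⟨⟨h01, h02, h03⟩, ⟨h12, h13⟩, h23, -⟩ := hw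
  rcases h₁₂ with h₁₂ | h₂₁
  · exact h₀₃ (hD w₀ w₁ w₂ w₃ h01 h02 h03 h12 h13 h23 h₀₁ h₁₂ h₃₂)
  · exact h₀₃ (hD w₃ w₂ w₁ w₀ (Ne.symm h23) (Ne.symm h13) (Ne.symm h03) (Ne.symm h12)
      (Ne.symm h02) (Ne.symm h01) h₃₂ h₂₁ h₀₁).symm

def InducesUnderlyingCycle {n : ℕ} (A : V → V → Prop) (c : ZMod n → V) : Prop :=
  ∀ i j : ZMod n, i ≠ j → (DAdj A (c i) (c j) ↔ (j = i + 1 ∨ i = j + 1))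

namespace InducesUnderlyingCycle

variable {A : V → V → Prop} {n : ℕ} {c : ZMod n → V}

theorem adj_succ (hc : InducesUnderlyingCycle A c) (hn : 2 ≤ n) (i : ZMod n) :
    DAdj A (c i) (c (i + 1)) := by
  have hne : i ≠ i + 1 := by
    simpa using i.add_natCast_ne_add_natCast (a := 0) (b := 1) (by omega) (by omega) (by omega)
  exact (hc i (i + 1) hne).2 (Or.inl rfl)

theorem not_adj_add_three (hc : InducesUnderlyingCycle A c) (hn : 5 ≤ n) (i : ZMod n) :
    ¬ DAdj A (c i) (c (i + 3)) := by
  have hne : i ≠ i + 3 := by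
    simpa using i.add_natCast_ne_add_natCast (a := 0) (b := 3) (by omega) (by omega) (by omega)
  rw [hc i (i + 3) hne]
  rintro (h | h)
  · exact i.add_natCast_ne_add_natCast (a := 3) (b := 1) (by omega) (by omega) (by omega)
      (by simpa using h)
  · exact i.add_natCast_ne_add_natCast (a := 0) (b := 4) (by omega) (by omega) (by omega)
      (by simpa [add_assoc, show (3 : ZMod n) + 1 = 4 by norm_num] using h)

theorem not_forward_and_backward_add_two (hD : ArcLocallyIn A)
    (hc : InducesUnderlyingCycle A c) (hinj : Function.Injective c) (hn : 5 ≤ n) (i : ZMod n) :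
    ¬ (A (c i) (c (i + 1)) ∧ A (c (i + 3)) (c (i + 2))) := by
  rintro ⟨h₀₁, h₃₂⟩
  have hw : [i, i + 1, i + 2, i + 3].Nodup := by
    have := (List.nodup_range (n := 4)).map_on (f := fun k : ℕ => i + k)
      fun a ha b hb hab => by
        by_contra hne
        exact i.add_natCast_ne_add_natCast (by simp at ha; omega) (by simp at hb; omega) hne hab
    simpa [List.range_succ] using this
  refine hD.false_of_arcs_into_middle (hw.map hinj) ?_ (hc.not_adj_add_three hn i) h₀₁ h₃₂
  simpa [add_assoc, show (1 : ZMod n) + 1 = 2 by norm_num] using hc.adj_succ (by omega) (i + 1)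

theorem forward_add_two (hD : ArcLocallyIn A) (hc : InducesUnderlyingCycle A c)
    (hinj : Function.Injective c) (hn : 5 ≤ n) (i : ZMod n) (h : A (c i) (c (i + 1))) :
    A (c (i + 2)) (c (i + 2 + 1)) := by
  refine (hc.adj_succ (by omega) (i + 2)).resolve_right fun hb => ?_
  refine hc.not_forward_and_backward_add_two hD hinj hn i ⟨h, ?_⟩
  simpa [add_assoc, show (2 : ZMod n) + 1 = 3 by norm_num] using hb

end InducesUnderlyingCycle

theorem stmt_0_general {V : Type*} (A : V → V → Prop) (hD : ArcLocallyIn A) :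
    ¬ ∃ (n : ℕ) (c : ZMod n → V), Odd n ∧ 5 ≤ n ∧ Function.Injective c ∧
      (∀ i j : ZMod n, i ≠ j →
        (DAdj A (c i) (c j) ↔ (j = i + 1 ∨ i = j + 1))) ∧
      ¬ (∀ i : ZMod n, A (c i) (c (i + 1)) ∧ ¬ A (c (i + 1)) (c i)) ∧
      ¬ (∀ i : ZMod n, A (c (i + 1)) (c i) ∧ ¬ A (c i) (c (i + 1))) := by
  rintro ⟨n, c, hodd, hn, hinj, hc, hnot_fwd, hnot_bwd⟩
  change InducesUnderlyingCycle A c at hc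
  by_cases hf : ∃ i, A (c i) (c (i + 1))
  · obtain ⟨i, hi⟩ := hf
    have hall := ZMod.forall_of_add_two hodd (hc.forward_add_two hD hinj hn) hi
    refine hnot_fwd fun j => ⟨hall j, fun hb => ?_⟩
    refine hc.not_forward_and_backward_add_two hD hinj hn (j - 2) ⟨hall _, ?_⟩
    rwa [show j - 2 + 3 = j + 1 by ring, sub_add_cancel]
  · rw [not_exists] at hf
    exact hnot_bwd fun i => ⟨(hc.adj_succ (by omega) i).resolve_left (hf i), hf i⟩

/-- An arc-locally in-semicomplete digraph contains no induced
non-oriented odd cycle of length at least five: there is no odd `n ≥ 5` and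
injective `c : ZMod n → V` whose image induces a cycle in the underlying graph
(adjacency exactly between consecutive vertices) but whose induced subdigraph
is not a directed cycle (in either orientation). -/
theorem stmt_0 {V : Type*} [Fintype V] (A : V → V → Prop) (hirr : Irreflexive A)
    (hD : ArcLocallyIn A) :
    ¬ ∃ (n : ℕ) (c : ZMod n → V), Odd n ∧ 5 ≤ n ∧ Function.Injective c ∧
      (∀ i j : ZMod n, i ≠ j →
        (DAdj A (c i) (c j) ↔ (j = i + 1 ∨ i = j + 1))) ∧
      ¬ (∀ i : ZMod n, A (c i) (c (i + 1)) ∧ ¬ A (c (i + 1)) (c i)) ∧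
      ¬ (∀ i : ZMod n, A (c (i + 1)) (c i) ∧ ¬ A (c i) (c (i + 1))) :=
  stmt_0_general A hD
end

section
/- If D is an arc-locally in-semicomplete digraph, then every induced odd cycle of length at least five in the underlying graph U(D) is induced in D by a directed odd cycle of D; that is, every set of vertices of odd size at least five inducing a cycle in U(D) induces a directed cycle in D. -/
variable {V : Type*}

/-! Since `i` and `i + 3` are not adjacent on an induced cycle of length at least five,
arc-local in-semicompleteness forbids the pattern `i → i+1 → i+2 ← i+3`. Hence two consecutive
arcs pointing forward force the next edge to point forward as well, and going around the cycle
every edge is a forward arc and none is a backward one; reversing the cycle treats two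
consecutive backward arcs. If consecutive arcs never point the same way, the direction of the
arcs alternates along the cycle, which is impossible when its length is odd. -/

namespace ZMod

theorem add_natCast_ne_add_natCast_s1 {n a b : ℕ} (i : ZMod n) (hab : a ≠ b) (ha : a < n)
    (hb : b < n) : i + a ≠ i + b := by
  rw [Ne, add_right_inj, natCast_eq_natCast_iff', Nat.mod_eq_of_lt ha, Nat.mod_eq_of_lt hb]
  exact hab

theorem forall_of_add_one {n : ℕ} [NeZero n] {P : ZMod n → Prop} (hP : ∀ i, P i → P (i + 1))
    {i₀ : ZMod n} (h₀ : P i₀) (j : ZMod n) : P j := by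
  have hk : ∀ k : ℕ, P (i₀ + k) := by
    intro k
    induction k with
    | zero => simpa using h₀
    | succ k ih => simpa only [Nat.cast_succ, ← add_assoc] using hP _ ih
  simpa using hk (j - i₀).val

theorem not_forall_add_one_iff_not {n : ℕ} (hn : Odd n) (P : ZMod n → Prop) :
    ¬ ∀ i, (P (i + 1) ↔ ¬ P i) := by
  intro hP
  have hk : ∀ k : ℕ, (P k ↔ (P 0 ↔ Even k)) := by
    intro k
    induction k with
    | zero => simp
    | succ k ih => rw [Nat.cast_succ, hP, ih, Nat.even_add_one]; tauto
  have := hk n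
  rw [natCast_self, ← Nat.not_odd_iff_even] at this
  tauto

end ZMod

section InducedCycle

variable {A : V → V → Prop} {n : ℕ} {c : ZMod n → V}

def IsInducedCycle (A : V → V → Prop) (c : ZMod n → V) : Prop :=
  Function.Injective c ∧
    ∀ i j : ZMod n, i ≠ j → (DAdj A (c i) (c j) ↔ (j = i + 1 ∨ i = j + 1))

theorem IsInducedCycle.reverse (hc : IsInducedCycle A c) : IsInducedCycle A (fun i => c (-i)) := by
  refine ⟨hc.1.comp neg_injective, fun i j hij => ?_⟩
  rw [hc.2 _ _ (neg_injective.ne hij)]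
  constructor <;> rintro (h | h) <;> grind

theorem IsInducedCycle.dAdj_add_one (hc : IsInducedCycle A c) (hn : 5 ≤ n) (i : ZMod n) :
    DAdj A (c i) (c (i + 1)) := by
  have h01 : i ≠ i + 1 := by
    simpa using i.add_natCast_ne_add_natCast_s1 (a := 0) (b := 1) (by omega) (by omega) (by omega)
  exact (hc.2 i (i + 1) h01).mpr (Or.inl rfl)

theorem ArcLocallyIn.not_arc_add_three (hD : ArcLocallyIn A) (hc : IsInducedCycle A c)
    (hn : 5 ≤ n) {i : ZMod n} (h₀ : A (c i) (c (i + 1))) (h₁ : A (c (i + 1)) (c (i + 2))) :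
    ¬ A (c (i + 3)) (c (i + 2)) := by
  have hidx (a b : ℕ) (hab : a < b) (hb : b < 5) : i + a ≠ i + b :=
    i.add_natCast_ne_add_natCast_s1 hab.ne (by omega) (by omega)
  have hne (a b : ℕ) (hab : a < b) (hb : b < 4) : c (i + a) ≠ c (i + b) :=
    hc.1.ne (hidx a b hab (by omega))
  have h03 : i ≠ i + 3 := by simpa using hidx 0 3 (by omega) (by omega)
  have h13 : i + 1 ≠ i + 3 := by simpa using hidx 1 3 (by omega) (by omega)
  have h04 : i ≠ i + 3 + 1 := by
    have := hidx 0 4 (by omega) (by omega)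
    rw [add_assoc]
    norm_num at this ⊢
    exact this
  have hfar : ¬ DAdj A (c i) (c (i + 3)) := by
    rw [hc.2 _ _ h03]
    rintro (h | h)
    exacts [h13 h.symm, h04 h]
  intro h₂
  refine hfar (hD _ _ _ _ ?_ ?_ ?_ ?_ ?_ ?_ h₀ h₁ h₂)
  · simpa using hne 0 1 (by omega) (by omega)
  · simpa using hne 0 2 (by omega) (by omega)
  · simpa using hne 0 3 (by omega) (by omega)
  · simpa using hne 1 2 (by omega) (by omega)
  · simpa using hne 1 3 (by omega) (by omega)
  · simpa using hne 2 3 (by omega) (by omega)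

theorem ArcLocallyIn.forall_arc_add_one (hD : ArcLocallyIn A) (hc : IsInducedCycle A c)
    (hn : 5 ≤ n) {i : ZMod n} (h₀ : A (c i) (c (i + 1))) (h₁ : A (c (i + 1)) (c (i + 2)))
    (j : ZMod n) : A (c j) (c (j + 1)) ∧ ¬ A (c (j + 1)) (c j) := by
  have : NeZero n := ⟨by omega⟩
  have e₁ (k : ZMod n) : k + 1 + 1 = k + 2 := by ring
  have e₂ (k : ZMod n) : k + 2 + 1 = k + 3 := by ring
  have hfwd : ∀ k, A (c k) (c (k + 1)) := by
    refine fun k => (ZMod.forall_of_add_one (P := fun k => A (c k) (c (k + 1)) ∧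
      A (c (k + 1)) (c (k + 2))) ?_ ⟨h₀, h₁⟩ k).1
    rintro m ⟨hm₀, hm₁⟩
    have hm₂ : A (c (m + 2)) (c (m + 3)) :=
      (e₂ m ▸ hc.dAdj_add_one hn (m + 2)).resolve_right (hD.not_arc_add_three hc hn hm₀ hm₁)
    rw [e₁, show m + 1 + 2 = m + 3 by ring]
    exact ⟨hm₁, hm₂⟩
  obtain ⟨k, rfl⟩ : ∃ k, j = k + 2 := ⟨j - 2, by ring⟩
  refine ⟨hfwd _, ?_⟩
  rw [e₂]
  exact hD.not_arc_add_three hc hn (hfwd k) (e₁ k ▸ hfwd (k + 1))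

theorem ArcLocallyIn.forall_arc_sub_one (hD : ArcLocallyIn A) (hc : IsInducedCycle A c)
    (hn : 5 ≤ n) {i : ZMod n} (h₀ : A (c (i + 2)) (c (i + 1))) (h₁ : A (c (i + 1)) (c i))
    (j : ZMod n) : A (c (j + 1)) (c j) ∧ ¬ A (c j) (c (j + 1)) := by
  have e₁ : -(-(i + 2) + 1) = i + 1 := by ring
  have e₂ : -(-(i + 2) + 2) = i := by ring
  have e₃ : -(-(j + 1) + 1) = j := by ring
  have h := hD.forall_arc_add_one hc.reverse hn (i := -(i + 2)) (by simpa only [neg_neg, e₁])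
    (by simpa only [e₁, e₂])
  simpa only [neg_neg, e₃] using h (-(j + 1))

theorem exists_arc_arc_of_odd (hn : Odd n) (hadj : ∀ i, DAdj A (c i) (c (i + 1))) :
    (∃ i, A (c i) (c (i + 1)) ∧ A (c (i + 1)) (c (i + 2))) ∨
      ∃ i, A (c (i + 2)) (c (i + 1)) ∧ A (c (i + 1)) (c i) := by
  by_contra! ⟨hf, hb⟩
  refine ZMod.not_forall_add_one_iff_not hn (fun i => A (c i) (c (i + 1))) fun i => ?_
  have e : i + 1 + 1 = i + 2 := by ring
  simp only [e]
  constructor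
  · exact fun h₁ h₀ => hf i h₀ h₁
  · intro h₀
    have hb₀ := (hadj i).resolve_left h₀
    exact (e ▸ hadj (i + 1)).resolve_right fun hb₁ => hb i hb₁ hb₀

end InducedCycle

theorem stmt_1_general {V : Type*} (A : V → V → Prop)
    (hD : ArcLocallyIn A) :
    ∀ (n : ℕ) (c : ZMod n → V), Odd n → 5 ≤ n → Function.Injective c →
      (∀ i j : ZMod n, i ≠ j →
        (DAdj A (c i) (c j) ↔ (j = i + 1 ∨ i = j + 1))) →
      ((∀ i : ZMod n, A (c i) (c (i + 1)) ∧ ¬ A (c (i + 1)) (c i)) ∨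
       (∀ i : ZMod n, A (c (i + 1)) (c i) ∧ ¬ A (c i) (c (i + 1)))) := by
  intro n c hodd hn hinj hind
  have hc : IsInducedCycle A c := ⟨hinj, hind⟩
  obtain ⟨i, h₀, h₁⟩ | ⟨i, h₀, h₁⟩ :=
    exists_arc_arc_of_odd hodd (hc.dAdj_add_one hn)
  · exact Or.inl (hD.forall_arc_add_one hc hn h₀ h₁)
  · exact Or.inr (hD.forall_arc_sub_one hc hn h₀ h₁)

/-- In an arc-locally in-semicomplete digraph, every induced
odd cycle of length at least five in the underlying graph is induced in `D` by
a directed odd cycle: the arcs on it go consistently in one direction around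
the cycle (and only in that direction). -/
theorem stmt_1 {V : Type*} [Fintype V] (A : V → V → Prop) (hirr : Irreflexive A)
    (hD : ArcLocallyIn A) :
    ∀ (n : ℕ) (c : ZMod n → V), Odd n → 5 ≤ n → Function.Injective c →
      (∀ i j : ZMod n, i ≠ j →
        (DAdj A (c i) (c j) ↔ (j = i + 1 ∨ i = j + 1))) →
      ((∀ i : ZMod n, A (c i) (c (i + 1)) ∧ ¬ A (c (i + 1)) (c i)) ∨
       (∀ i : ZMod n, A (c (i + 1)) (c i) ∧ ¬ A (c i) (c (i + 1)))) :=
  stmt_1_general A hD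
end

section
/- An arc-locally in-semicomplete digraph contains no induced subdigraph whose underlying graph is the complement of an odd cycle of length at least seven. -/
variable {V : Type*}

/-- An arc-locally in-semicomplete digraph contains no induced
subdigraph whose underlying graph is the complement of an odd cycle of length
at least seven. -/
theorem stmt_2 {V : Type*} [Fintype V] (A : V → V → Prop) (hirr : Irreflexive A)
    (hD : ArcLocallyIn A) :
    ¬ ∃ (n : ℕ) (c : ZMod n → V), Odd n ∧ 7 ≤ n ∧ Function.Injective c ∧
      (∀ i j : ZMod n, i ≠ j →
        (DAdj A (c i) (c j) ↔ ¬ (j = i + 1 ∨ i = j + 1))) := by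
  rintro ⟨n, c, -, h7, hinj, hadj⟩
  haveI : NeZero n := ⟨by omega⟩
  have hcast : ∀ a b : ℕ, a < n → b < n → (a : ZMod n) = (b : ZMod n) → a = b := by
    intro a b ha hb h
    have h2 := congrArg ZMod.val h
    rwa [ZMod.val_natCast_of_lt ha, ZMod.val_natCast_of_lt hb] at h2
  have hedge : ∀ a b : ℕ, a < b → b ≤ 5 → b ≠ a + 1 →
      A (c (a : ℕ)) (c (b : ℕ)) ∨ A (c (b : ℕ)) (c (a : ℕ)) := by
    intro a b hab hb hne1
    refine (hadj _ _ (fun h => absurd (hcast a b (by omega) (by omega) h) (by omega))).mpr ?_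
    rintro (h | h)
    · apply hne1
      apply hcast b (a + 1) (by omega) (by omega)
      rw [h]; push_cast; ring
    · have : a = b + 1 := hcast a (b + 1) (by omega) (by omega) (by rw [h]; push_cast; ring)
      omega
  have hnon : ∀ a b : ℕ, b = a + 1 → a ≤ 4 → ¬ DAdj A (c (a : ℕ)) (c (b : ℕ)) := by
    intro a b hb ha had
    have hne : (a : ZMod n) ≠ (b : ZMod n) :=
      fun h => by have := hcast a b (by omega) (by omega) h; omega
    apply (hadj _ _ hne).mp had
    left; subst hb; push_cast; ring
  have hv : ∀ a b : ℕ, a ≤ 5 → b ≤ 5 → a ≠ b → c (a : ℕ) ≠ c (b : ℕ) :=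
    fun a b ha hb hne h => absurd (hcast a b (by omega) (by omega) (hinj h)) hne
  obtain h0 | h0 := hedge 0 2 (by norm_num) (by norm_num) (by norm_num)
  · -- 0->2
    obtain h1 | h1 := hedge 0 3 (by norm_num) (by norm_num) (by norm_num)
    · -- 0->3
      obtain h2 | h2 := hedge 0 4 (by norm_num) (by norm_num) (by norm_num)
      · -- 0->4
        obtain h3 | h3 := hedge 0 5 (by norm_num) (by norm_num) (by norm_num)
        · -- 0->5
          obtain h4 | h4 := hedge 1 3 (by norm_num) (by norm_num) (by norm_num)
          · -- 1->3
            obtain h5 | h5 := hedge 3 5 (by norm_num) (by norm_num) (by norm_num)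
            · -- 3->5
              exact hnon 0 1 (by norm_num) (by norm_num) (Or.symm (hD _ _ _ _ (hv 1 3 (by norm_num) (by norm_num) (by norm_num)) (hv 1 5 (by norm_num) (by norm_num) (by norm_num)) (hv 1 0 (by norm_num) (by norm_num) (by norm_num)) (hv 3 5 (by norm_num) (by norm_num) (by norm_num)) (hv 3 0 (by norm_num) (by norm_num) (by norm_num)) (hv 5 0 (by norm_num) (by norm_num) (by norm_num)) h4 h5 h3))
            · -- 5->3
              exact hnon 0 1 (by norm_num) (by norm_num) (hD _ _ _ _ (hv 0 5 (by norm_num) (by norm_num) (by norm_num)) (hv 0 3 (by norm_num) (by norm_num) (by norm_num)) (hv 0 1 (by norm_num) (by norm_num) (by norm_num)) (hv 5 3 (by norm_num) (by norm_num) (by norm_num)) (hv 5 1 (by norm_num) (by norm_num) (by norm_num)) (hv 3 1 (by norm_num) (by norm_num) (by norm_num)) h3 h5 h4)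
          · -- 3->1
            obtain h5 | h5 := hedge 1 4 (by norm_num) (by norm_num) (by norm_num)
            · -- 1->4
              obtain h6 | h6 := hedge 2 4 (by norm_num) (by norm_num) (by norm_num)
              · -- 2->4
                exact hnon 0 1 (by norm_num) (by norm_num) (hD _ _ _ _ (hv 0 2 (by norm_num) (by norm_num) (by norm_num)) (hv 0 4 (by norm_num) (by norm_num) (by norm_num)) (hv 0 1 (by norm_num) (by norm_num) (by norm_num)) (hv 2 4 (by norm_num) (by norm_num) (by norm_num)) (hv 2 1 (by norm_num) (by norm_num) (by norm_num)) (hv 4 1 (by norm_num) (by norm_num) (by norm_num)) h0 h6 h5)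
              · -- 4->2
                exact hnon 0 1 (by norm_num) (by norm_num) (Or.symm (hD _ _ _ _ (hv 1 4 (by norm_num) (by norm_num) (by norm_num)) (hv 1 2 (by norm_num) (by norm_num) (by norm_num)) (hv 1 0 (by norm_num) (by norm_num) (by norm_num)) (hv 4 2 (by norm_num) (by norm_num) (by norm_num)) (hv 4 0 (by norm_num) (by norm_num) (by norm_num)) (hv 2 0 (by norm_num) (by norm_num) (by norm_num)) h5 h6 h0))
            · -- 4->1
              obtain h6 | h6 := hedge 2 4 (by norm_num) (by norm_num) (by norm_num)
              · -- 2->4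
                exact hnon 2 3 (by norm_num) (by norm_num) (hD _ _ _ _ (hv 2 4 (by norm_num) (by norm_num) (by norm_num)) (hv 2 1 (by norm_num) (by norm_num) (by norm_num)) (hv 2 3 (by norm_num) (by norm_num) (by norm_num)) (hv 4 1 (by norm_num) (by norm_num) (by norm_num)) (hv 4 3 (by norm_num) (by norm_num) (by norm_num)) (hv 1 3 (by norm_num) (by norm_num) (by norm_num)) h6 h5 h4)
              · -- 4->2
                obtain h7 | h7 := hedge 3 5 (by norm_num) (by norm_num) (by norm_num)
                · -- 3->5
                  obtain h8 | h8 := hedge 1 5 (by norm_num) (by norm_num) (by norm_num)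
                  · -- 1->5
                    exact hnon 0 1 (by norm_num) (by norm_num) (hD _ _ _ _ (hv 0 3 (by norm_num) (by norm_num) (by norm_num)) (hv 0 5 (by norm_num) (by norm_num) (by norm_num)) (hv 0 1 (by norm_num) (by norm_num) (by norm_num)) (hv 3 5 (by norm_num) (by norm_num) (by norm_num)) (hv 3 1 (by norm_num) (by norm_num) (by norm_num)) (hv 5 1 (by norm_num) (by norm_num) (by norm_num)) h1 h7 h8)
                  · -- 5->1
                    exact hnon 3 4 (by norm_num) (by norm_num) (hD _ _ _ _ (hv 3 5 (by norm_num) (by norm_num) (by norm_num)) (hv 3 1 (by norm_num) (by norm_num) (by norm_num)) (hv 3 4 (by norm_num) (by norm_num) (by norm_num)) (hv 5 1 (by norm_num) (by norm_num) (by norm_num)) (hv 5 4 (by norm_num) (by norm_num) (by norm_num)) (hv 1 4 (by norm_num) (by norm_num) (by norm_num)) h7 h8 h5)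
                · -- 5->3
                  exact hnon 4 5 (by norm_num) (by norm_num) (Or.symm (hD _ _ _ _ (hv 5 3 (by norm_num) (by norm_num) (by norm_num)) (hv 5 1 (by norm_num) (by norm_num) (by norm_num)) (hv 5 4 (by norm_num) (by norm_num) (by norm_num)) (hv 3 1 (by norm_num) (by norm_num) (by norm_num)) (hv 3 4 (by norm_num) (by norm_num) (by norm_num)) (hv 1 4 (by norm_num) (by norm_num) (by norm_num)) h7 h4 h5))
        · -- 5->0
          obtain h4 | h4 := hedge 2 4 (by norm_num) (by norm_num) (by norm_num)
          · -- 2->4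
            obtain h5 | h5 := hedge 1 4 (by norm_num) (by norm_num) (by norm_num)
            · -- 1->4
              exact hnon 0 1 (by norm_num) (by norm_num) (hD _ _ _ _ (hv 0 2 (by norm_num) (by norm_num) (by norm_num)) (hv 0 4 (by norm_num) (by norm_num) (by norm_num)) (hv 0 1 (by norm_num) (by norm_num) (by norm_num)) (hv 2 4 (by norm_num) (by norm_num) (by norm_num)) (hv 2 1 (by norm_num) (by norm_num) (by norm_num)) (hv 4 1 (by norm_num) (by norm_num) (by norm_num)) h0 h4 h5)
            · -- 4->1
              obtain h6 | h6 := hedge 1 3 (by norm_num) (by norm_num) (by norm_num)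
              · -- 1->3
                obtain h7 | h7 := hedge 3 5 (by norm_num) (by norm_num) (by norm_num)
                · -- 3->5
                  obtain h8 | h8 := hedge 1 5 (by norm_num) (by norm_num) (by norm_num)
                  · -- 1->5
                    exact hnon 0 1 (by norm_num) (by norm_num) (hD _ _ _ _ (hv 0 3 (by norm_num) (by norm_num) (by norm_num)) (hv 0 5 (by norm_num) (by norm_num) (by norm_num)) (hv 0 1 (by norm_num) (by norm_num) (by norm_num)) (hv 3 5 (by norm_num) (by norm_num) (by norm_num)) (hv 3 1 (by norm_num) (by norm_num) (by norm_num)) (hv 5 1 (by norm_num) (by norm_num) (by norm_num)) h1 h7 h8)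
                  · -- 5->1
                    exact hnon 3 4 (by norm_num) (by norm_num) (hD _ _ _ _ (hv 3 5 (by norm_num) (by norm_num) (by norm_num)) (hv 3 1 (by norm_num) (by norm_num) (by norm_num)) (hv 3 4 (by norm_num) (by norm_num) (by norm_num)) (hv 5 1 (by norm_num) (by norm_num) (by norm_num)) (hv 5 4 (by norm_num) (by norm_num) (by norm_num)) (hv 1 4 (by norm_num) (by norm_num) (by norm_num)) h7 h8 h5)
                · -- 5->3
                  exact hnon 4 5 (by norm_num) (by norm_num) (hD _ _ _ _ (hv 4 1 (by norm_num) (by norm_num) (by norm_num)) (hv 4 3 (by norm_num) (by norm_num) (by norm_num)) (hv 4 5 (by norm_num) (by norm_num) (by norm_num)) (hv 1 3 (by norm_num) (by norm_num) (by norm_num)) (hv 1 5 (by norm_num) (by norm_num) (by norm_num)) (hv 3 5 (by norm_num) (by norm_num) (by norm_num)) h5 h6 h7)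
              · -- 3->1
                exact hnon 2 3 (by norm_num) (by norm_num) (hD _ _ _ _ (hv 2 4 (by norm_num) (by norm_num) (by norm_num)) (hv 2 1 (by norm_num) (by norm_num) (by norm_num)) (hv 2 3 (by norm_num) (by norm_num) (by norm_num)) (hv 4 1 (by norm_num) (by norm_num) (by norm_num)) (hv 4 3 (by norm_num) (by norm_num) (by norm_num)) (hv 1 3 (by norm_num) (by norm_num) (by norm_num)) h4 h5 h6)
          · -- 4->2
            exact hnon 4 5 (by norm_num) (by norm_num) (Or.symm (hD _ _ _ _ (hv 5 0 (by norm_num) (by norm_num) (by norm_num)) (hv 5 2 (by norm_num) (by norm_num) (by norm_num)) (hv 5 4 (by norm_num) (by norm_num) (by norm_num)) (hv 0 2 (by norm_num) (by norm_num) (by norm_num)) (hv 0 4 (by norm_num) (by norm_num) (by norm_num)) (hv 2 4 (by norm_num) (by norm_num) (by norm_num)) h3 h0 h4))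
      · -- 4->0
        obtain h3 | h3 := hedge 2 5 (by norm_num) (by norm_num) (by norm_num)
        · -- 2->5
          obtain h4 | h4 := hedge 1 5 (by norm_num) (by norm_num) (by norm_num)
          · -- 1->5
            exact hnon 0 1 (by norm_num) (by norm_num) (hD _ _ _ _ (hv 0 2 (by norm_num) (by norm_num) (by norm_num)) (hv 0 5 (by norm_num) (by norm_num) (by norm_num)) (hv 0 1 (by norm_num) (by norm_num) (by norm_num)) (hv 2 5 (by norm_num) (by norm_num) (by norm_num)) (hv 2 1 (by norm_num) (by norm_num) (by norm_num)) (hv 5 1 (by norm_num) (by norm_num) (by norm_num)) h0 h3 h4)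
          · -- 5->1
            obtain h5 | h5 := hedge 1 3 (by norm_num) (by norm_num) (by norm_num)
            · -- 1->3
              obtain h6 | h6 := hedge 3 5 (by norm_num) (by norm_num) (by norm_num)
              · -- 3->5
                exact hnon 1 2 (by norm_num) (by norm_num) (hD _ _ _ _ (hv 1 3 (by norm_num) (by norm_num) (by norm_num)) (hv 1 5 (by norm_num) (by norm_num) (by norm_num)) (hv 1 2 (by norm_num) (by norm_num) (by norm_num)) (hv 3 5 (by norm_num) (by norm_num) (by norm_num)) (hv 3 2 (by norm_num) (by norm_num) (by norm_num)) (hv 5 2 (by norm_num) (by norm_num) (by norm_num)) h5 h6 h3)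
              · -- 5->3
                exact hnon 1 2 (by norm_num) (by norm_num) (Or.symm (hD _ _ _ _ (hv 2 5 (by norm_num) (by norm_num) (by norm_num)) (hv 2 3 (by norm_num) (by norm_num) (by norm_num)) (hv 2 1 (by norm_num) (by norm_num) (by norm_num)) (hv 5 3 (by norm_num) (by norm_num) (by norm_num)) (hv 5 1 (by norm_num) (by norm_num) (by norm_num)) (hv 3 1 (by norm_num) (by norm_num) (by norm_num)) h3 h6 h5))
            · -- 3->1
              exact hnon 2 3 (by norm_num) (by norm_num) (hD _ _ _ _ (hv 2 5 (by norm_num) (by norm_num) (by norm_num)) (hv 2 1 (by norm_num) (by norm_num) (by norm_num)) (hv 2 3 (by norm_num) (by norm_num) (by norm_num)) (hv 5 1 (by norm_num) (by norm_num) (by norm_num)) (hv 5 3 (by norm_num) (by norm_num) (by norm_num)) (hv 1 3 (by norm_num) (by norm_num) (by norm_num)) h3 h4 h5)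
        · -- 5->2
          exact hnon 4 5 (by norm_num) (by norm_num) (hD _ _ _ _ (hv 4 0 (by norm_num) (by norm_num) (by norm_num)) (hv 4 2 (by norm_num) (by norm_num) (by norm_num)) (hv 4 5 (by norm_num) (by norm_num) (by norm_num)) (hv 0 2 (by norm_num) (by norm_num) (by norm_num)) (hv 0 5 (by norm_num) (by norm_num) (by norm_num)) (hv 2 5 (by norm_num) (by norm_num) (by norm_num)) h2 h0 h3)
    · -- 3->0
      obtain h2 | h2 := hedge 2 4 (by norm_num) (by norm_num) (by norm_num)
      · -- 2->4
        obtain h3 | h3 := hedge 0 4 (by norm_num) (by norm_num) (by norm_num)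
        · -- 0->4
          exact hnon 2 3 (by norm_num) (by norm_num) (Or.symm (hD _ _ _ _ (hv 3 0 (by norm_num) (by norm_num) (by norm_num)) (hv 3 4 (by norm_num) (by norm_num) (by norm_num)) (hv 3 2 (by norm_num) (by norm_num) (by norm_num)) (hv 0 4 (by norm_num) (by norm_num) (by norm_num)) (hv 0 2 (by norm_num) (by norm_num) (by norm_num)) (hv 4 2 (by norm_num) (by norm_num) (by norm_num)) h1 h3 h2))
        · -- 4->0
          exact hnon 2 3 (by norm_num) (by norm_num) (hD _ _ _ _ (hv 2 4 (by norm_num) (by norm_num) (by norm_num)) (hv 2 0 (by norm_num) (by norm_num) (by norm_num)) (hv 2 3 (by norm_num) (by norm_num) (by norm_num)) (hv 4 0 (by norm_num) (by norm_num) (by norm_num)) (hv 4 3 (by norm_num) (by norm_num) (by norm_num)) (hv 0 3 (by norm_num) (by norm_num) (by norm_num)) h2 h3 h1)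
      · -- 4->2
        exact hnon 3 4 (by norm_num) (by norm_num) (hD _ _ _ _ (hv 3 0 (by norm_num) (by norm_num) (by norm_num)) (hv 3 2 (by norm_num) (by norm_num) (by norm_num)) (hv 3 4 (by norm_num) (by norm_num) (by norm_num)) (hv 0 2 (by norm_num) (by norm_num) (by norm_num)) (hv 0 4 (by norm_num) (by norm_num) (by norm_num)) (hv 2 4 (by norm_num) (by norm_num) (by norm_num)) h1 h0 h2)
  · -- 2->0
    obtain h1 | h1 := hedge 0 3 (by norm_num) (by norm_num) (by norm_num)
    · -- 0->3
      obtain h2 | h2 := hedge 1 3 (by norm_num) (by norm_num) (by norm_num)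
      · -- 1->3
        exact hnon 1 2 (by norm_num) (by norm_num) (Or.symm (hD _ _ _ _ (hv 2 0 (by norm_num) (by norm_num) (by norm_num)) (hv 2 3 (by norm_num) (by norm_num) (by norm_num)) (hv 2 1 (by norm_num) (by norm_num) (by norm_num)) (hv 0 3 (by norm_num) (by norm_num) (by norm_num)) (hv 0 1 (by norm_num) (by norm_num) (by norm_num)) (hv 3 1 (by norm_num) (by norm_num) (by norm_num)) h0 h1 h2))
      · -- 3->1
        obtain h3 | h3 := hedge 0 4 (by norm_num) (by norm_num) (by norm_num)
        · -- 0->4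
          obtain h4 | h4 := hedge 1 4 (by norm_num) (by norm_num) (by norm_num)
          · -- 1->4
            exact hnon 1 2 (by norm_num) (by norm_num) (Or.symm (hD _ _ _ _ (hv 2 0 (by norm_num) (by norm_num) (by norm_num)) (hv 2 4 (by norm_num) (by norm_num) (by norm_num)) (hv 2 1 (by norm_num) (by norm_num) (by norm_num)) (hv 0 4 (by norm_num) (by norm_num) (by norm_num)) (hv 0 1 (by norm_num) (by norm_num) (by norm_num)) (hv 4 1 (by norm_num) (by norm_num) (by norm_num)) h0 h3 h4))
          · -- 4->1
            obtain h5 | h5 := hedge 2 4 (by norm_num) (by norm_num) (by norm_num)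
            · -- 2->4
              exact hnon 2 3 (by norm_num) (by norm_num) (hD _ _ _ _ (hv 2 4 (by norm_num) (by norm_num) (by norm_num)) (hv 2 1 (by norm_num) (by norm_num) (by norm_num)) (hv 2 3 (by norm_num) (by norm_num) (by norm_num)) (hv 4 1 (by norm_num) (by norm_num) (by norm_num)) (hv 4 3 (by norm_num) (by norm_num) (by norm_num)) (hv 1 3 (by norm_num) (by norm_num) (by norm_num)) h5 h4 h2)
            · -- 4->2
              obtain h6 | h6 := hedge 0 5 (by norm_num) (by norm_num) (by norm_num)
              · -- 0->5
                obtain h7 | h7 := hedge 3 5 (by norm_num) (by norm_num) (by norm_num)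
                · -- 3->5
                  exact hnon 2 3 (by norm_num) (by norm_num) (hD _ _ _ _ (hv 2 0 (by norm_num) (by norm_num) (by norm_num)) (hv 2 5 (by norm_num) (by norm_num) (by norm_num)) (hv 2 3 (by norm_num) (by norm_num) (by norm_num)) (hv 0 5 (by norm_num) (by norm_num) (by norm_num)) (hv 0 3 (by norm_num) (by norm_num) (by norm_num)) (hv 5 3 (by norm_num) (by norm_num) (by norm_num)) h0 h6 h7)
                · -- 5->3
                  exact hnon 4 5 (by norm_num) (by norm_num) (Or.symm (hD _ _ _ _ (hv 5 3 (by norm_num) (by norm_num) (by norm_num)) (hv 5 1 (by norm_num) (by norm_num) (by norm_num)) (hv 5 4 (by norm_num) (by norm_num) (by norm_num)) (hv 3 1 (by norm_num) (by norm_num) (by norm_num)) (hv 3 4 (by norm_num) (by norm_num) (by norm_num)) (hv 1 4 (by norm_num) (by norm_num) (by norm_num)) h7 h2 h4))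
              · -- 5->0
                exact hnon 4 5 (by norm_num) (by norm_num) (hD _ _ _ _ (hv 4 2 (by norm_num) (by norm_num) (by norm_num)) (hv 4 0 (by norm_num) (by norm_num) (by norm_num)) (hv 4 5 (by norm_num) (by norm_num) (by norm_num)) (hv 2 0 (by norm_num) (by norm_num) (by norm_num)) (hv 2 5 (by norm_num) (by norm_num) (by norm_num)) (hv 0 5 (by norm_num) (by norm_num) (by norm_num)) h5 h0 h6)
        · -- 4->0
          obtain h4 | h4 := hedge 1 4 (by norm_num) (by norm_num) (by norm_num)
          · -- 1->4
            exact hnon 1 2 (by norm_num) (by norm_num) (hD _ _ _ _ (hv 1 4 (by norm_num) (by norm_num) (by norm_num)) (hv 1 0 (by norm_num) (by norm_num) (by norm_num)) (hv 1 2 (by norm_num) (by norm_num) (by norm_num)) (hv 4 0 (by norm_num) (by norm_num) (by norm_num)) (hv 4 2 (by norm_num) (by norm_num) (by norm_num)) (hv 0 2 (by norm_num) (by norm_num) (by norm_num)) h4 h3 h0)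
          · -- 4->1
            obtain h5 | h5 := hedge 2 4 (by norm_num) (by norm_num) (by norm_num)
            · -- 2->4
              exact hnon 2 3 (by norm_num) (by norm_num) (hD _ _ _ _ (hv 2 4 (by norm_num) (by norm_num) (by norm_num)) (hv 2 1 (by norm_num) (by norm_num) (by norm_num)) (hv 2 3 (by norm_num) (by norm_num) (by norm_num)) (hv 4 1 (by norm_num) (by norm_num) (by norm_num)) (hv 4 3 (by norm_num) (by norm_num) (by norm_num)) (hv 1 3 (by norm_num) (by norm_num) (by norm_num)) h5 h4 h2)
            · -- 4->2
              obtain h6 | h6 := hedge 0 5 (by norm_num) (by norm_num) (by norm_num)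
              · -- 0->5
                obtain h7 | h7 := hedge 3 5 (by norm_num) (by norm_num) (by norm_num)
                · -- 3->5
                  exact hnon 2 3 (by norm_num) (by norm_num) (hD _ _ _ _ (hv 2 0 (by norm_num) (by norm_num) (by norm_num)) (hv 2 5 (by norm_num) (by norm_num) (by norm_num)) (hv 2 3 (by norm_num) (by norm_num) (by norm_num)) (hv 0 5 (by norm_num) (by norm_num) (by norm_num)) (hv 0 3 (by norm_num) (by norm_num) (by norm_num)) (hv 5 3 (by norm_num) (by norm_num) (by norm_num)) h0 h6 h7)
                · -- 5->3
                  exact hnon 4 5 (by norm_num) (by norm_num) (hD _ _ _ _ (hv 4 0 (by norm_num) (by norm_num) (by norm_num)) (hv 4 3 (by norm_num) (by norm_num) (by norm_num)) (hv 4 5 (by norm_num) (by norm_num) (by norm_num)) (hv 0 3 (by norm_num) (by norm_num) (by norm_num)) (hv 0 5 (by norm_num) (by norm_num) (by norm_num)) (hv 3 5 (by norm_num) (by norm_num) (by norm_num)) h3 h1 h7)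
              · -- 5->0
                exact hnon 4 5 (by norm_num) (by norm_num) (hD _ _ _ _ (hv 4 2 (by norm_num) (by norm_num) (by norm_num)) (hv 4 0 (by norm_num) (by norm_num) (by norm_num)) (hv 4 5 (by norm_num) (by norm_num) (by norm_num)) (hv 2 0 (by norm_num) (by norm_num) (by norm_num)) (hv 2 5 (by norm_num) (by norm_num) (by norm_num)) (hv 0 5 (by norm_num) (by norm_num) (by norm_num)) h5 h0 h6)
    · -- 3->0
      obtain h2 | h2 := hedge 1 3 (by norm_num) (by norm_num) (by norm_num)
      · -- 1->3
        exact hnon 1 2 (by norm_num) (by norm_num) (hD _ _ _ _ (hv 1 3 (by norm_num) (by norm_num) (by norm_num)) (hv 1 0 (by norm_num) (by norm_num) (by norm_num)) (hv 1 2 (by norm_num) (by norm_num) (by norm_num)) (hv 3 0 (by norm_num) (by norm_num) (by norm_num)) (hv 3 2 (by norm_num) (by norm_num) (by norm_num)) (hv 0 2 (by norm_num) (by norm_num) (by norm_num)) h2 h1 h0)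
      · -- 3->1
        obtain h3 | h3 := hedge 2 4 (by norm_num) (by norm_num) (by norm_num)
        · -- 2->4
          obtain h4 | h4 := hedge 0 4 (by norm_num) (by norm_num) (by norm_num)
          · -- 0->4
            exact hnon 2 3 (by norm_num) (by norm_num) (Or.symm (hD _ _ _ _ (hv 3 0 (by norm_num) (by norm_num) (by norm_num)) (hv 3 4 (by norm_num) (by norm_num) (by norm_num)) (hv 3 2 (by norm_num) (by norm_num) (by norm_num)) (hv 0 4 (by norm_num) (by norm_num) (by norm_num)) (hv 0 2 (by norm_num) (by norm_num) (by norm_num)) (hv 4 2 (by norm_num) (by norm_num) (by norm_num)) h1 h4 h3))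
          · -- 4->0
            exact hnon 2 3 (by norm_num) (by norm_num) (hD _ _ _ _ (hv 2 4 (by norm_num) (by norm_num) (by norm_num)) (hv 2 0 (by norm_num) (by norm_num) (by norm_num)) (hv 2 3 (by norm_num) (by norm_num) (by norm_num)) (hv 4 0 (by norm_num) (by norm_num) (by norm_num)) (hv 4 3 (by norm_num) (by norm_num) (by norm_num)) (hv 0 3 (by norm_num) (by norm_num) (by norm_num)) h3 h4 h1)
        · -- 4->2
          exact hnon 3 4 (by norm_num) (by norm_num) (Or.symm (hD _ _ _ _ (hv 4 2 (by norm_num) (by norm_num) (by norm_num)) (hv 4 0 (by norm_num) (by norm_num) (by norm_num)) (hv 4 3 (by norm_num) (by norm_num) (by norm_num)) (hv 2 0 (by norm_num) (by norm_num) (by norm_num)) (hv 2 3 (by norm_num) (by norm_num) (by norm_num)) (hv 0 3 (by norm_num) (by norm_num) (by norm_num)) h3 h0 h1))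
end

section
/- Let D be a non-strong arc-locally in-semicomplete digraph and let Q be a non-initial strong component of D whose induced subdigraph is an odd extended cycle of length at least five. Then every strong component of D that is reached from Q by a directed path is trivial (consists of a single vertex). -/
variable {V : Type*}

def SCset (A : V → V → Prop) (u : V) : Set V :=
  {x | Relation.ReflTransGen A u x ∧ Relation.ReflTransGen A x u}

lemma strongOn_SCset (A : V → V → Prop) (u : V) : StrongOn A (SCset A u) := by
  intro a ha b hb
  have key : ∀ c, Relation.ReflTransGen A c b → c ∈ SCset A u →
      Relation.ReflTransGen (ArcOn A (SCset A u)) c b := by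
    intro c hcb
    induction hcb using Relation.ReflTransGen.head_induction_on with
    | refl => intro _; exact Relation.ReflTransGen.refl
    | head hstep hrest ih =>
      intro hc
      rename_i x y
      have hy : y ∈ SCset A u := ⟨hc.1.tail hstep, hrest.trans hb.2⟩
      exact Relation.ReflTransGen.head ⟨hc, hy, hstep⟩ (ih hy)
  exact key a (ha.2.trans hb.1) ha

lemma comp_eq_SCset {A : V → V → Prop} {S : Set V} (hS : IsStrongComponent A S)
    {u : V} (hu : u ∈ S) : S = SCset A u := by
  obtain ⟨-, hstr, hmax⟩ := hS
  have hsub : S ⊆ SCset A u := by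
    intro x hx
    exact ⟨Relation.ReflTransGen.mono (r := ArcOn A S) (fun a b h => h.2.2) _ _ (hstr u hu x hx),
           Relation.ReflTransGen.mono (r := ArcOn A S) (fun a b h => h.2.2) _ _ (hstr x hx u hu)⟩
  exact le_antisymm hsub (hmax _ hsub (strongOn_SCset A u))

lemma comp_eq_of_mem {A : V → V → Prop} {S T : Set V} (hS : IsStrongComponent A S)
    (hT : IsStrongComponent A T) {x : V} (hxS : x ∈ S) (hxT : x ∈ T) : S = T := by
  rw [comp_eq_SCset hS hxS, comp_eq_SCset hT hxT]

def WalkN (A : V → V → Prop) : ℕ → V → V → Prop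
  | 0, u, v => u = v
  | n+1, u, v => ∃ w, WalkN A n u w ∧ A w v

lemma reach_walkN {A : V → V → Prop} {u v : V} (h : Reach A u v) : ∃ n, WalkN A n u v := by
  induction h with
  | refl => exact ⟨0, rfl⟩
  | tail _ hstep ih => obtain ⟨n, hw⟩ := ih; exact ⟨n+1, _, hw, hstep⟩


/-- If `D` is non-strong arc-locally in-semicomplete and `Q` is
a non-initial strong component inducing an odd extended cycle of length at least
five, then every strong component reached from `Q` is trivial. -/
theorem stmt_4 {V : Type*} [Fintype V] (A : V → V → Prop) (hirr : Irreflexive A)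
    (hD : ArcLocallyIn A) (hns : ¬ IsStrong A)
    (Q : Set V) (hQ : IsStrongComponent A Q) (hQni : ¬ IsInitial A Q)
    (hQec : IsOddExtCycle5On A Q) :
    ∀ K : Set V, IsStrongComponent A K → K ≠ Q →
      (∃ u ∈ Q, ∃ v ∈ K, Reach A u v) → K.Subsingleton := by
    classical
  rintro K hK hKQ ⟨q₀, hq₀, v₀, hv₀, hreach⟩
  intro a ha b hb
  by_contra hab
  obtain ⟨k, hodd, hk5, hk2, X, hXne, hXdisj, hXunion, hXarc⟩ := hQec
  have hQstr := hQ.2.1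
  have hKstr := hK.2.1
  -- basic set facts
  have hdisj : ∀ x, x ∈ Q → x ∈ K → False := fun x hxQ hxK =>
    hKQ (comp_eq_of_mem hK hQ hxK hxQ)
  have XsubQ : ∀ i, X i ⊆ Q := by
    intro i x hx
    rw [← hXunion]; exact Set.mem_iUnion.mpr ⟨i, hx⟩
  have uniqX : ∀ {c : V} {i1 i2 : ZMod k}, c ∈ X i1 → c ∈ X i2 → i1 = i2 := by
    intro c i1 i2 h1 h2
    by_contra h
    exact Set.disjoint_left.mp (hXdisj i1 i2 h) h1 h2
  have memX : ∀ q ∈ Q, ∃ i, q ∈ X i := by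
    intro q hq
    rw [← hXunion] at hq
    exact Set.mem_iUnion.mp hq
  have arcCyc : ∀ (i : ZMod k), ∀ p ∈ X i, ∀ r ∈ X (i + 1), A p r := fun i p hp r hr =>
    (hXarc p (XsubQ _ hp) r (XsubQ _ hr)).mpr ⟨i, hp, hr⟩
  -- small casts
  have hZ : ∀ m : ℕ, 0 < m → m < 5 → ((m : ZMod k)) ≠ 0 := by
    intro m hm hm5 h
    rw [ZMod.natCast_eq_zero_iff] at h
    have := Nat.le_of_dvd hm h
    omega
  have h1 : (1 : ZMod k) ≠ 0 := by simpa using hZ 1 (by norm_num) (by norm_num)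
  have h2 : (2 : ZMod k) ≠ 0 := by
    have := hZ 2 (by norm_num) (by norm_num); simpa using this
  have h3 : (3 : ZMod k) ≠ 0 := by
    have := hZ 3 (by norm_num) (by norm_num); simpa using this
  have h4 : (4 : ZMod k) ≠ 0 := by
    have := hZ 4 (by norm_num) (by norm_num); simpa using this
  -- no arc from K back to Q
  have noArcKQ : ∀ x ∈ K, ∀ y ∈ Q, ¬ A x y := by
    intro x hx y hy hxy
    have hx' : x ∈ SCset A q₀ := by
      refine ⟨hreach.trans (Relation.ReflTransGen.mono (r := ArcOn A K) (fun a b h => h.2.2) _ _ (hKstr v₀ hv₀ x hx)), ?_⟩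
      exact (Relation.ReflTransGen.single hxy).trans
        (Relation.ReflTransGen.mono (r := ArcOn A Q) (fun a b h => h.2.2) _ _ (hQstr y hy q₀ hq₀))
    have hxQ : x ∈ Q := (comp_eq_SCset hQ hq₀) ▸ hx'
    exact hdisj x hxQ hx
  -- there is an in-neighbor within K of any vertex of K
  have getIn : ∀ c ∈ K, ∃ y ∈ K, A y c := by
    intro c hc
    have hx : ∃ x, x ∈ K ∧ x ≠ c := by
      by_cases h : c = a
      · exact ⟨b, hb, fun hbc => hab ((hbc.trans h).symm)⟩
      · exact ⟨a, ha, fun hac => h hac.symm⟩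
    obtain ⟨x, hxK, hxc⟩ := hx
    rcases (hKstr x hxK c hc).cases_tail with heq | ⟨y, _, hyc⟩
    · exact absurd heq.symm hxc
    · exact ⟨y, hyc.1, hyc.2.2⟩
  -- Step 1: there is a direct arc from Q to K
  have key1 : ∃ q ∈ Q, ∃ v ∈ K, A q v := by
    obtain ⟨n, hwn⟩ := reach_walkN hreach
    have hex : ∃ n, ∃ u ∈ Q, ∃ v ∈ K, WalkN A n u v := ⟨n, q₀, hq₀, v₀, hv₀, hwn⟩
    obtain ⟨u0, hu0, v, hvK, hwalk⟩ := Nat.find_spec hex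
    have hmin := fun n h => Nat.find_min hex (m := n) h
    rcases hn : Nat.find hex with _ | _ | m
    · rw [hn] at hwalk
      exact absurd hvK (fun h => hdisj u0 hu0 (hwalk ▸ h))
    · rw [hn] at hwalk
      obtain ⟨w, hw0, harc⟩ := hwalk
      exact ⟨u0, hu0, v, hvK, hw0 ▸ harc⟩
    · rw [hn] at hwalk
      obtain ⟨w1, hwalk1, harc1⟩ := hwalk
      obtain ⟨w2, hwalk2, harc2⟩ := hwalk1
      exfalso
      have hw1K : w1 ∉ K := fun h =>
        hmin (m+1) (by omega) ⟨u0, hu0, w1, h, ⟨w2, hwalk2, harc2⟩⟩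
      have hw2K : w2 ∉ K := fun h => hmin m (by omega) ⟨u0, hu0, w2, h, hwalk2⟩
      obtain ⟨y, hyK, hyv⟩ := getIn v hvK
      have hne1 : w2 ≠ w1 := fun h => hirr w1 (h ▸ harc2)
      have hne2 : w2 ≠ v := fun h => hw2K (h ▸ hvK)
      have hne3 : w2 ≠ y := fun h => hw2K (h ▸ hyK)
      have hne4 : w1 ≠ v := fun h => hirr v (h ▸ harc1)
      have hne5 : w1 ≠ y := fun h => hw1K (h ▸ hyK)
      have hne6 : v ≠ y := fun h => hirr y (h ▸ hyv)
      rcases hD w2 w1 v y hne1 hne2 hne3 hne4 hne5 hne6 harc2 harc1 hyv with h | h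
      · exact hmin (m+1) (by omega) ⟨u0, hu0, y, hyK, w2, hwalk2, h⟩
      · apply hw2K
        have : w2 ∈ SCset A v := by
          refine ⟨(Relation.ReflTransGen.mono (r := ArcOn A K) (fun a b h => h.2.2) _ _ (hKstr v hvK y hyK)).tail h, ?_⟩
          exact (Relation.ReflTransGen.single harc2).tail harc1
        exact (comp_eq_SCset hK hvK) ▸ this
  -- single class lemma
  have claim : ∀ z, z ∉ Q → ∀ j j' : ZMod k, j' ≠ j →
      ∀ q1 ∈ X j, ∀ q2 ∈ X j', A q1 z → A q2 z → j' = j - 2 := by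
    intro z hz j j' hne q1 hq1 q2 hq2 harc1 harc2
    have hq1Q := XsubQ _ hq1
    have hq2Q := XsubQ _ hq2
    have hq1q2 : q1 ≠ q2 := fun h =>
      hne (uniqX hq2 (show q2 ∈ X j from h ▸ hq1))
    by_cases hc : q2 ∈ X (j - 1)
    · -- impossible subcase
      exfalso
      obtain ⟨p', hp'⟩ := hXne (j - 2)
      have hp'Q := XsubQ _ hp'
      have harcp' : A p' q2 := by
        refine arcCyc (j - 2) p' hp' q2 ?_
        rw [show j - 2 + 1 = j - 1 by ring]; exact hc
      have d1 : p' ≠ q2 := fun h => h1 (by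
        have := uniqX (h ▸ hp') hc; linear_combination -this)
      have d2 : p' ≠ z := fun h => hz (h ▸ hp'Q)
      have d3 : p' ≠ q1 := fun h => h2 (by
        have := uniqX (h ▸ hp') hq1; linear_combination -this)
      have d4 : q2 ≠ z := fun h => hz (h ▸ hq2Q)
      have d5 : z ≠ q1 := fun h => hz (h.symm ▸ hq1Q : z ∈ Q)
      rcases hD p' q2 z q1 d1 d2 d3 d4 hq1q2.symm d5 harcp' harc2 harc1 with h | h
      · obtain ⟨i', hpi', hq1i'⟩ := (hXarc p' hp'Q q1 hq1Q).mp h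
        have e1 : i' = j - 2 := uniqX hpi' hp'
        have e2 : i' + 1 = j := uniqX hq1i' hq1
        exact h1 (by linear_combination e1 - e2)
      · obtain ⟨i', hq1i', hpi'⟩ := (hXarc q1 hq1Q p' hp'Q).mp h
        have e1 : i' = j := uniqX hq1i' hq1
        have e2 : i' + 1 = j - 2 := uniqX hpi' hp'
        exact h3 (by linear_combination e2 - e1)
    · obtain ⟨p, hp⟩ := hXne (j - 1)
      have hpQ := XsubQ _ hp
      have harcp : A p q1 := by
        refine arcCyc (j - 1) p hp q1 ?_
        rw [show j - 1 + 1 = j by ring]; exact hq1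
      have d1 : p ≠ q1 := fun h => h1 (by
        have := uniqX (h ▸ hp) hq1; linear_combination -this)
      have d2 : p ≠ z := fun h => hz (h ▸ hpQ)
      have d3 : p ≠ q2 := fun h => hc (h ▸ hp)
      have d4 : q1 ≠ z := fun h => hz (h ▸ hq1Q)
      have d5 : z ≠ q2 := fun h => hz (h.symm ▸ hq2Q : z ∈ Q)
      rcases hD p q1 z q2 d1 d2 d3 d4 hq1q2 d5 harcp harc1 harc2 with h | h
      · exfalso
        obtain ⟨i', hpi', hq2i'⟩ := (hXarc p hpQ q2 hq2Q).mp h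
        have e1 : i' = j - 1 := uniqX hpi' hp
        have e2 : i' + 1 = j' := uniqX hq2i' hq2
        exact hne (by linear_combination e1 - e2)
      · obtain ⟨i', hq2i', hpi'⟩ := (hXarc q2 hq2Q p hpQ).mp h
        have e1 : i' = j' := uniqX hq2i' hq2
        have e2 : i' + 1 = j - 1 := uniqX hpi' hp
        linear_combination e2 - e1
  have singleCl : ∀ z, z ∉ Q → ∀ j j' : ZMod k,
      ∀ q1 ∈ X j, ∀ q2 ∈ X j', A q1 z → A q2 z → j' = j := by
    intro z hz j j' q1 hq1 q2 hq2 harc1 harc2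
    by_contra hne
    have e1 := claim z hz j j' hne q1 hq1 q2 hq2 harc1 harc2
    have e2 := claim z hz j' j (Ne.symm hne) q2 hq2 q1 hq1 harc2 harc1
    exact h4 (by linear_combination e1 + e2)
  -- domination propagation step
  have step : ∀ z ∈ K, ∀ j : ZMod k, (∃ p ∈ X j, A p z) →
      ∀ y ∈ K, A y z → ∀ p' ∈ X (j - 1), A p' y := by
    rintro z hzK j ⟨p, hpX, hpz⟩ y hyK hyz p' hp'X
    have hpQ := XsubQ _ hpX
    have hp'Q := XsubQ _ hp'X
    have harcp : A p' p := by
      refine arcCyc (j - 1) p' hp'X p ?_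
      rw [show j - 1 + 1 = j by ring]; exact hpX
    have d1 : p' ≠ p := fun h => h1 (by
      have := uniqX (h ▸ hp'X) hpX; linear_combination -this)
    have d2 : p' ≠ z := fun h => hdisj p' hp'Q (h ▸ hzK)
    have d3 : p' ≠ y := fun h => hdisj p' hp'Q (h ▸ hyK)
    have d4 : p ≠ z := fun h => hdisj p hpQ (h ▸ hzK)
    have d5 : p ≠ y := fun h => hdisj p hpQ (h ▸ hyK)
    have d6 : z ≠ y := fun h => hirr z (h.symm ▸ hyz : A z z)
    rcases hD p' p z y d1 d2 d3 d4 d5 d6 harcp hpz hyz with h | h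
    · exact h
    · exact absurd h (noArcKQ y hyK p' hp'Q)
  -- finish
  obtain ⟨q, hqQ, v, hvK, hqv⟩ := key1
  obtain ⟨i, hqXi⟩ := memX q hqQ
  obtain ⟨y, hyK, hyv⟩ := getIn v hvK
  have hdom1 : ∀ p' ∈ X (i - 1), A p' y :=
    step v hvK i ⟨q, hqXi, hqv⟩ y hyK hyv
  obtain ⟨z, hzK, hzy⟩ := getIn y hyK
  obtain ⟨p1, hp1⟩ := hXne (i - 1)
  have hdom2 : ∀ p' ∈ X (i - 1 - 1), A p' z :=
    step y hyK (i - 1) ⟨p1, hp1, hdom1 p1 hp1⟩ z hzK hzy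
  obtain ⟨p2, hp2⟩ := hXne (i - 1 - 1)
  have hp2z : A p2 z := hdom2 p2 hp2
  have hzQ : z ∉ Q := fun h => hdisj z h hzK
  have hvQ : v ∉ Q := fun h => hdisj v h hvK
  by_cases hzv : z = v
  · subst hzv
    have := singleCl z hzQ i (i - 1 - 1) q hqXi p2 hp2 hqv hp2z
    exact h2 (by linear_combination -this)
  · have d1 : z ≠ y := fun h => hirr z (h ▸ hzy)
    have d3 : z ≠ q := fun h => hdisj z (h ▸ hqQ) hzK
    have d4 : y ≠ v := fun h => hirr y (h ▸ hyv)
    have d5 : y ≠ q := fun h => hdisj y (h ▸ hqQ) hyK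
    have d6 : v ≠ q := fun h => hdisj v (h ▸ hqQ) hvK
    rcases hD z y v q d1 hzv d3 d4 d5 d6 hzy hyv hqv with h | h
    · exact noArcKQ z hzK q hqQ h
    · have := singleCl z hzQ i (i - 1 - 1) q hqXi p2 hp2 h hp2z
      exact h2 (by linear_combination -this)
end

section
/- Let D be a non-strong arc-locally in-semicomplete digraph and let Q be a non-initial strong component of D whose induced subdigraph is an odd extended cycle of length at least five. Let W be the union of the vertex sets of all strong components of D that reach Q by a directed path. Then the subdigraph of D induced by W is semicomplete. -/
variable {V : Type*}

section StmtSixAux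

variable {V : Type*} {A : V → V → Prop}

private lemma aux_reach_of_arcOn {S : Set V} {x y : V}
    (h : Relation.ReflTransGen (ArcOn A S) x y) : Reach A x y :=
  Relation.ReflTransGen.mono (fun _ _ hab => hab.2.2) _ _ h

private lemma aux_lift_reach {T : Set V} :
    ∀ {x y : V}, Reach A x y →
      (∀ z, Reach A x z → Reach A z y → z ∈ T) →
      Relation.ReflTransGen (ArcOn A T) x y := by
  intro x y hxy
  induction hxy using Relation.ReflTransGen.head_induction_on with
  | refl => exact fun _ => .refl
  | @head a c hac hcy ih =>
    intro hT
    have hay : Reach A a y := .head hac hcy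
    have haT : a ∈ T := hT a .refl hay
    have hcT : c ∈ T := hT c (.single hac) hcy
    exact .head ⟨haT, hcT, hac⟩ (ih fun z hz1 hz2 => hT z (.head hac hz1) hz2)

private lemma aux_no_back {Q : Set V} (hQ : IsStrongComponent A Q)
    {u w q : V} (hu : u ∉ Q) (hw : w ∈ Q) (hr : Reach A u w)
    (hq : q ∈ Q) (harc : A q u) : False := by
  set T : Set V := {x | Reach A u x ∧ Reach A x w} with hTdef
  have hQT : Q ⊆ T := by
    intro x hx
    exact ⟨hr.trans (aux_reach_of_arcOn (hQ.2.1 w hw x hx)),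
      aux_reach_of_arcOn (hQ.2.1 x hx w hw)⟩
  have huT : u ∈ T := ⟨.refl, hr⟩
  have hstr : StrongOn A T := by
    intro x hx y hy
    have h1 : Relation.ReflTransGen (ArcOn A T) x w :=
      aux_lift_reach hx.2 (fun z h1 h2 => ⟨hx.1.trans h1, h2⟩)
    have h2 : Relation.ReflTransGen (ArcOn A T) w q :=
      Relation.ReflTransGen.mono (fun a b hab => ⟨hQT hab.1, hQT hab.2.1, hab.2.2⟩) _ _ (hQ.2.1 w hw q hq)
    have h3 : Relation.ReflTransGen (ArcOn A T) q u :=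
      .single ⟨hQT hq, huT, harc⟩
    have h4 : Relation.ReflTransGen (ArcOn A T) u y :=
      aux_lift_reach hy.1 (fun z h1 h2 => ⟨h1, h2.trans hy.2⟩)
    exact ((h1.trans h2).trans h3).trans h4
  exact hu (hQ.2.2 T hQT hstr huT)

private lemma aux_comp_eq {K Q : Set V} (hK : IsStrongComponent A K)
    (hQ : IsStrongComponent A Q) {u : V} (hu : u ∈ K) (hu' : u ∈ Q) : K = Q := by
  have hstr : StrongOn A (K ∪ Q) := by
    intro x hx y hy
    have lft : ∀ {S : Set V}, S ⊆ K ∪ Q → ∀ {a b : V},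
        Relation.ReflTransGen (ArcOn A S) a b →
        Relation.ReflTransGen (ArcOn A (K ∪ Q)) a b :=
      fun hS _ _ h => Relation.ReflTransGen.mono (fun a b hab => ⟨hS hab.1, hS hab.2.1, hab.2.2⟩) _ _ h
    have hxu : Relation.ReflTransGen (ArcOn A (K ∪ Q)) x u := by
      rcases hx with h | h
      · exact lft Set.subset_union_left (hK.2.1 x h u hu)
      · exact lft Set.subset_union_right (hQ.2.1 x h u hu')
    have huy : Relation.ReflTransGen (ArcOn A (K ∪ Q)) u y := by
      rcases hy with h | h
      · exact lft Set.subset_union_left (hK.2.1 u hu y h)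
      · exact lft Set.subset_union_right (hQ.2.1 u hu' y h)
    exact hxu.trans huy
  have h1 := hK.2.2 _ Set.subset_union_left hstr
  have h2 := hQ.2.2 _ Set.subset_union_right hstr
  exact Set.Subset.antisymm (Set.subset_union_left.trans h2)
    (Set.subset_union_right.trans h1)

section Cycle

variable {Q : Set V} {k : ℕ} {X : ZMod k → Set V}

private lemma aux_step (hD : ArcLocallyIn A) (hQ : IsStrongComponent A Q)
    (hk : 5 ≤ k)
    (hne : ∀ i, (X i).Nonempty)
    (hdis : ∀ i j, i ≠ j → Disjoint (X i) (X j))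
    (hun : (⋃ i, X i) = Q)
    (hiff : ∀ u ∈ Q, ∀ v ∈ Q, (A u v ↔ ∃ i, u ∈ X i ∧ v ∈ X (i + 1)))
    {v q : V} (hv : v ∉ Q) (hvq : A v q) {i : ZMod k} (hqi : q ∈ X i) :
    ∃ a ∈ X (i - 2), A v a := by
  have hkz : NeZero k := ⟨by omega⟩
  have hsub : ∀ j, X j ⊆ Q := fun j => hun ▸ Set.subset_iUnion X j
  have hcast : ∀ n : ℕ, 0 < n → n < k → ((n : ZMod k) ≠ 0) := by
    intro n h1 h2 h
    have := (ZMod.natCast_eq_zero_iff n k).mp h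
    have := Nat.le_of_dvd h1 this
    omega
  have h1k : (1 : ZMod k) ≠ 0 := by
    have := hcast 1 (by omega) (by omega); simpa using this
  have h2k : (2 : ZMod k) ≠ 0 := by
    have := hcast 2 (by omega) (by omega); simpa using this
  have h21 : (2 : ZMod k) ≠ 1 := by
    intro h
    apply h1k
    have : (2 : ZMod k) - 1 = 0 := by rw [h]; ring
    calc (1 : ZMod k) = 2 - 1 := by ring
    _ = 0 := this
  have hii1 : i - 1 ≠ i := fun h => h1k (by
    have := sub_right_inj.mp (show i - 1 = i - 0 by simpa using h); simpa using this)
  have hii2 : i - 2 ≠ i := fun h => h2k (by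
    have := sub_right_inj.mp (show i - 2 = i - 0 by simpa using h); simpa using this)
  have hi21 : i - 2 ≠ i - 1 := fun h => h21 (sub_right_inj.mp h)
  obtain ⟨w, hw⟩ := hne (i - 1)
  obtain ⟨w', hw'⟩ := hne (i - 2)
  have hwQ : w ∈ Q := hsub _ hw
  have hw'Q : w' ∈ Q := hsub _ hw'
  have hqQ : q ∈ Q := hsub _ hqi
  have hww' : w' ≠ w := fun h => (hdis _ _ hi21).le_bot ⟨h ▸ hw', hw⟩
  have hwq : w ≠ q := fun h => (hdis _ _ hii1).le_bot ⟨hw, h ▸ hqi⟩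
  have hw'q : w' ≠ q := fun h => (hdis _ _ hii2).le_bot ⟨hw', h ▸ hqi⟩
  have haww : A w' w := (hiff w' hw'Q w hwQ).mpr ⟨i - 2, hw', by
    have : i - 2 + 1 = i - 1 := by ring
    rw [this]; exact hw⟩
  have hawq : A w q := (hiff w hwQ q hqQ).mpr ⟨i - 1, hw, by
    have : i - 1 + 1 = i := by ring
    rw [this]; exact hqi⟩
  have hadj : DAdj A w' v :=
    hD w' w q v hww' hw'q (fun h => hv (h ▸ hw'Q)) hwq (fun h => hv (h ▸ hwQ))
      (fun h => hv (h ▸ hqQ)) haww hawq hvq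
  rcases hadj with h | h
  · exact absurd h (fun h => aux_no_back hQ hv hqQ (.single hvq) hw'Q h)
  · exact ⟨w', hw', h⟩

private lemma aux_all_classes (hD : ArcLocallyIn A) (hQ : IsStrongComponent A Q)
    (hodd : Odd k) (hk : 5 ≤ k)
    (hne : ∀ i, (X i).Nonempty)
    (hdis : ∀ i j, i ≠ j → Disjoint (X i) (X j))
    (hun : (⋃ i, X i) = Q)
    (hiff : ∀ u ∈ Q, ∀ v ∈ Q, (A u v ↔ ∃ i, u ∈ X i ∧ v ∈ X (i + 1)))
    {v q : V} (hv : v ∉ Q) (hvq : A v q) (hq : q ∈ Q) :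
    ∀ j : ZMod k, ∃ a ∈ X j, A v a := by
  have hkz : NeZero k := ⟨by omega⟩
  obtain ⟨i, hqi⟩ : ∃ i, q ∈ X i := by
    rw [← hun] at hq; simpa using hq
  have key : ∀ m : ℕ, ∃ a ∈ X (i - 2 * (m : ZMod k)), A v a := by
    intro m
    induction m with
    | zero => exact ⟨q, by simpa using hqi, hvq⟩
    | succ n ih =>
      obtain ⟨a, ha, hva⟩ := ih
      obtain ⟨b, hb, hvb⟩ := aux_step hD hQ hk hne hdis hun hiff hv hva ha
      refine ⟨b, ?_, hvb⟩
      have : i - 2 * ((n : ZMod k)) - 2 = i - 2 * (((n + 1 : ℕ)) : ZMod k) := by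
        push_cast; ring
      rw [← this]; exact hb
  intro j
  have hcop : Nat.Coprime 2 k := Nat.coprime_two_left.mpr hodd
  have hunit : IsUnit (2 : ZMod k) := by
    have := (ZMod.isUnit_iff_coprime 2 k).mpr hcop
    simpa using this
  obtain ⟨m, hm⟩ := ZMod.natCast_rightInverse.surjective
    ((((hunit.unit⁻¹ : (ZMod k)ˣ) : ZMod k)) * (i - j))
  obtain ⟨a, ha, hva⟩ := key m
  refine ⟨a, ?_, hva⟩
  have h2m : (2 : ZMod k) * (m : ZMod k) = i - j := by
    rw [hm, ← mul_assoc]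
    have huu : ((hunit.unit : (ZMod k)ˣ) : ZMod k) * ((hunit.unit⁻¹ : (ZMod k)ˣ) : ZMod k) = 1 :=
      hunit.unit.mul_inv
    rw [hunit.unit_spec] at huu
    rw [huu, one_mul]
  have : i - 2 * (m : ZMod k) = j := by rw [h2m]; ring
  rwa [this] at ha

private lemma aux_reach_dom (hirr : Irreflexive A) (hD : ArcLocallyIn A)
    (hQ : IsStrongComponent A Q)
    (hodd : Odd k) (hk : 5 ≤ k)
    (hne : ∀ i, (X i).Nonempty)
    (hdis : ∀ i j, i ≠ j → Disjoint (X i) (X j))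
    (hun : (⋃ i, X i) = Q)
    (hiff : ∀ u ∈ Q, ∀ v ∈ Q, (A u v ↔ ∃ i, u ∈ X i ∧ v ∈ X (i + 1)))
    {w : V} (hw : w ∈ Q) :
    ∀ {u : V}, Reach A u w → u ∉ Q → ∃ q ∈ Q, A u q := by
  have hkz : NeZero k := ⟨by omega⟩
  have hsub : ∀ j, X j ⊆ Q := fun j => hun ▸ Set.subset_iUnion X j
  have h1k : (1 : ZMod k) ≠ 0 := by
    intro h
    have h' : ((1 : ℕ) : ZMod k) = 0 := by simpa using h
    have := (ZMod.natCast_eq_zero_iff 1 k).mp h'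
    have := Nat.le_of_dvd (by omega) this
    omega
  intro u hru
  induction hru using Relation.ReflTransGen.head_induction_on with
  | refl => exact fun hu => absurd hw hu
  | @head a c hac hcw ih =>
    intro ha
    by_cases hc : c ∈ Q
    · exact ⟨c, hc, hac⟩
    · obtain ⟨q, hq, hcq⟩ := ih hc
      have hall := aux_all_classes hD hQ hodd hk hne hdis hun hiff hc hcq hq
      obtain ⟨x, hx, hcx⟩ := hall 0
      obtain ⟨y, hy⟩ := hne (-1 : ZMod k)
      have hxQ : x ∈ Q := hsub _ hx
      have hyQ : y ∈ Q := hsub _ hy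
      have hxy : x ≠ y := by
        intro h
        exact (hdis (0 : ZMod k) (-1) (fun h0 => h1k (by
          have : (1 : ZMod k) = 0 - (-1) := by ring
          rw [this, ← h0]; ring))).le_bot ⟨hx, h ▸ hy⟩
      have hraw : Reach A a w := .head hac hcw
      have hayx : A y x := (hiff y hyQ x hxQ).mpr ⟨-1, hy, by
        have : (-1 : ZMod k) + 1 = 0 := by ring
        rw [this]; exact hx⟩
      have hadj : DAdj A a y :=
        hD a c x y (fun h => hirr a (h ▸ hac)) (fun h => ha (h ▸ hxQ))
          (fun h => ha (h ▸ hyQ)) (fun h => hc (h ▸ hxQ)) (fun h => hc (h ▸ hyQ))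
          hxy hac hcx hayx
      rcases hadj with h | h
      · exact ⟨y, hyQ, h⟩
      · exact absurd h (fun h => aux_no_back hQ ha hw hraw hyQ h)

end Cycle

end StmtSixAux

/-- If `D` is non-strong arc-locally in-semicomplete and `Q` is
a non-initial strong component inducing an odd extended cycle of length at least
five, and `W` is the union of the strong components reaching `Q`, then the
subdigraph induced by `W` is semicomplete. -/
theorem stmt_6 {V : Type*} [Fintype V] (A : V → V → Prop) (hirr : Irreflexive A)
    (hD : ArcLocallyIn A) (hns : ¬ IsStrong A)
    (Q : Set V) (hQ : IsStrongComponent A Q) (hQni : ¬ IsInitial A Q)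
    (hQec : IsOddExtCycle5On A Q)
    (W : Set V)
    (hW : W = {v | ∃ K : Set V, IsStrongComponent A K ∧ K ≠ Q ∧ v ∈ K ∧
      ∃ u ∈ K, ∃ w ∈ Q, Reach A u w}) :
    SemicompleteOn A W := by
  obtain ⟨k, hodd, hk5, hk2, X, hXne, hXdis, hXun, hXiff⟩ := hQec
  have hsub : ∀ j, X j ⊆ Q := fun j => hXun ▸ Set.subset_iUnion X j
  have hkz : NeZero k := ⟨by omega⟩
  intro u1 hu1 u2 hu2 hne12
  rw [hW] at hu1 hu2
  obtain ⟨K1, hK1, hK1Q, hu1K, a1, ha1K, w1, hw1, hr1⟩ := hu1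
  obtain ⟨K2, hK2, hK2Q, hu2K, a2, ha2K, w2, hw2, hr2⟩ := hu2
  have hu1nQ : u1 ∉ Q := fun h => hK1Q (aux_comp_eq hK1 hQ hu1K h)
  have hu2nQ : u2 ∉ Q := fun h => hK2Q (aux_comp_eq hK2 hQ hu2K h)
  have hr1' : Reach A u1 w1 :=
    (aux_reach_of_arcOn (hK1.2.1 u1 hu1K a1 ha1K)).trans hr1
  have hr2' : Reach A u2 w2 :=
    (aux_reach_of_arcOn (hK2.2.1 u2 hu2K a2 ha2K)).trans hr2
  obtain ⟨q1, hq1, harc1⟩ :=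
    aux_reach_dom hirr hD hQ hodd hk5 hXne hXdis hXun hXiff hw1 hr1' hu1nQ
  obtain ⟨q2, hq2, harc2⟩ :=
    aux_reach_dom hirr hD hQ hodd hk5 hXne hXdis hXun hXiff hw2 hr2' hu2nQ
  obtain ⟨a, ha, h1a⟩ :=
    aux_all_classes hD hQ hodd hk5 hXne hXdis hXun hXiff hu1nQ harc1 hq1 (0 : ZMod k)
  obtain ⟨b, hb, h2b⟩ :=
    aux_all_classes hD hQ hodd hk5 hXne hXdis hXun hXiff hu2nQ harc2 hq2 (-1 : ZMod k)
  have haQ : a ∈ Q := hsub _ ha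
  have hbQ : b ∈ Q := hsub _ hb
  have h1k : (1 : ZMod k) ≠ 0 := by
    intro h
    have h' : ((1 : ℕ) : ZMod k) = 0 := by simpa using h
    have := (ZMod.natCast_eq_zero_iff 1 k).mp h'
    have := Nat.le_of_dvd (by omega) this
    omega
  have hab : b ≠ a := by
    intro h
    exact (hXdis (0 : ZMod k) (-1) (fun h0 => h1k (by
      have e : (1 : ZMod k) = 0 - (-1) := by ring
      rw [e, ← h0]; ring))).le_bot ⟨ha, h ▸ hb⟩
  have hba : A b a := (hXiff b hbQ a haQ).mpr ⟨-1, hb, by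
    have : (-1 : ZMod k) + 1 = 0 := by ring
    rw [this]; exact ha⟩
  have hadj : DAdj A u2 u1 :=
    hD u2 b a u1 (fun h => hu2nQ (h ▸ hbQ)) (fun h => hu2nQ (h ▸ haQ)) hne12.symm
      hab (fun h => hu1nQ (h ▸ hbQ)) (fun h => hu1nQ (h ▸ haQ)) h2b hba h1a
  rcases hadj with h | h
  · exact Or.inr h
  · exact Or.inl h
end

section
/- Let D be a non-strong arc-locally in-semicomplete digraph and let Q be a non-initial strong component of D whose induced subdigraph is an odd extended cycle of length at least five. Then there exists exactly one initial strong component of D that reaches Q by a directed path. -/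
variable {V : Type*}

open Relation

section Helpers

variable {A : V → V → Prop}

lemma arcOn_mono {S T : Set V} (hST : S ⊆ T) {x y : V} :
    ReflTransGen (ArcOn A S) x y → ReflTransGen (ArcOn A T) x y :=
  ReflTransGen.mono (r := ArcOn A S) (p := ArcOn A T) (fun _ _ (h : ArcOn A S _ _) => (⟨hST h.1, hST h.2.1, h.2.2⟩ : ArcOn A T _ _)) x y

lemma arcOn_le {S : Set V} {x y : V} :
    ReflTransGen (ArcOn A S) x y → ReflTransGen A x y :=
  ReflTransGen.mono (r := ArcOn A S) (p := A) (fun _ _ h => h.2.2) x y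

/-- The strong component of `u` as the mutual reachability class. -/
def DComp (A : V → V → Prop) (u : V) : Set V :=
  {w | Reach A u w ∧ Reach A w u}

lemma mem_dcomp_self (u : V) : u ∈ DComp A u := ⟨.refl, .refl⟩

lemma reach_arcOn {u x : V} (hx : Reach A u x) :
    ∀ {y}, ReflTransGen A x y → Reach A y u →
      ReflTransGen (ArcOn A (DComp A u)) x y := by
  intro y h
  induction h with
  | refl => exact fun _ => .refl
  | @tail b c h1 h2 ih =>
    intro hcu
    have hbu : Reach A b u := ReflTransGen.head h2 hcu
    exact (ih hbu).tail ⟨⟨hx.trans h1, hbu⟩, ⟨(hx.trans h1).tail h2, hcu⟩, h2⟩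

lemma dcomp_strongOn (u : V) : StrongOn A (DComp A u) := by
  intro a ha b hb
  exact reach_arcOn ha.1 (ha.2.trans hb.1) hb.2

lemma dcomp_isStrongComponent (u : V) : IsStrongComponent A (DComp A u) := by
  refine ⟨⟨u, mem_dcomp_self u⟩, dcomp_strongOn u, ?_⟩
  intro T hsub hT t ht
  have hu : u ∈ T := hsub (mem_dcomp_self u)
  exact ⟨arcOn_le (hT u hu t ht), arcOn_le (hT t ht u hu)⟩

lemma strongComponent_eq_dcomp {S : Set V} (hS : IsStrongComponent A S)
    {u : V} (hu : u ∈ S) : S = DComp A u := by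
  have h1 : S ⊆ DComp A u := fun s hs =>
    ⟨arcOn_le (hS.2.1 u hu s hs), arcOn_le (hS.2.1 s hs u hu)⟩
  exact h1.antisymm (hS.2.2 _ h1 (dcomp_strongOn u))

/-- If `q' → w → q` with `q,q' ∈ Q`, the strong component `Q` absorbs `w`. -/
lemma merge1 {Q : Set V} (hQ : IsStrongComponent A Q)
    {q q' w : V} (hq : q ∈ Q) (hq' : q' ∈ Q)
    (h1 : A q' w) (h2 : A w q) : w ∈ Q := by
  have hQT : Q ⊆ insert w Q := Set.subset_insert w Q
  have hwT : w ∈ insert w Q := Set.mem_insert w Q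
  have pQ : ∀ a ∈ Q, ∀ b ∈ Q, ReflTransGen (ArcOn A (insert w Q)) a b :=
    fun a ha b hb => arcOn_mono hQT (hQ.2.1 a ha b hb)
  have hst : StrongOn A (insert w Q) := by
    intro a ha b hb
    rcases Set.mem_insert_iff.mp ha with ha' | ha'
    · subst ha'
      rcases Set.mem_insert_iff.mp hb with hb' | hb'
      · subst hb'; exact .refl
      · exact .head ⟨hwT, hQT hq, h2⟩ (pQ q hq b hb')
    · rcases Set.mem_insert_iff.mp hb with hb' | hb'
      · subst hb'; exact (pQ a ha' q' hq').tail ⟨hQT hq', hwT, h1⟩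
      · exact pQ a ha' b hb'
  exact hQ.2.2 _ hQT hst hwT

/-- If `q' → w → s → q` with `q,q' ∈ Q`, the strong component `Q` absorbs `w`. -/
lemma merge2 {Q : Set V} (hQ : IsStrongComponent A Q)
    {q q' w s : V} (hq : q ∈ Q) (hq' : q' ∈ Q)
    (h1 : A q' w) (h2 : A w s) (h3 : A s q) : w ∈ Q := by
  set T := insert w (insert s Q) with hTdef
  have hQT : Q ⊆ T := (Set.subset_insert s Q).trans (Set.subset_insert w _)
  have hwT : w ∈ T := Set.mem_insert _ _
  have hsT : s ∈ T := Set.mem_insert_of_mem _ (Set.mem_insert _ _)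
  have pQ : ∀ a ∈ Q, ∀ b ∈ Q, ReflTransGen (ArcOn A T) a b :=
    fun a ha b hb => arcOn_mono hQT (hQ.2.1 a ha b hb)
  have toQ' : ∀ a ∈ T, ReflTransGen (ArcOn A T) a q' := by
    intro a ha
    rcases Set.mem_insert_iff.mp ha with rfl | ha
    · exact .head ⟨hwT, hsT, h2⟩ (.head ⟨hsT, hQT hq, h3⟩ (pQ q hq q' hq'))
    · rcases Set.mem_insert_iff.mp ha with rfl | ha
      · exact .head ⟨hsT, hQT hq, h3⟩ (pQ q hq q' hq')
      · exact pQ a ha q' hq'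
  have fromQ' : ∀ b ∈ T, ReflTransGen (ArcOn A T) q' b := by
    intro b hb
    rcases Set.mem_insert_iff.mp hb with rfl | hb
    · exact ReflTransGen.single ⟨hQT hq', hwT, h1⟩
    · rcases Set.mem_insert_iff.mp hb with rfl | hb
      · exact (ReflTransGen.single ⟨hQT hq', hwT, h1⟩).tail ⟨hwT, hsT, h2⟩
      · exact (((ReflTransGen.single ⟨hQT hq', hwT, h1⟩).tail
          ⟨hwT, hsT, h2⟩).tail ⟨hsT, hQT hq, h3⟩).trans (pQ q hq b hb)
  have hst : StrongOn A T := fun a ha b hb => (toQ' a ha).trans (fromQ' b hb)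
  exact hQ.2.2 _ hQT hst hwT

end Helpers

/-- If `D` is non-strong arc-locally in-semicomplete and `Q` is
a non-initial strong component inducing an odd extended cycle of length at least
five, then there exists exactly one initial strong component reaching `Q`. -/
theorem stmt_7 {V : Type*} [Fintype V] (A : V → V → Prop) (hirr : Irreflexive A)
    (hD : ArcLocallyIn A) (hns : ¬ IsStrong A)
    (Q : Set V) (hQ : IsStrongComponent A Q) (hQni : ¬ IsInitial A Q)
    (hQec : IsOddExtCycle5On A Q) :
    ∃! K : Set V, IsStrongComponent A K ∧ IsInitial A K ∧
      ∃ u ∈ K, ∃ v ∈ Q, Reach A u v := by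
  classical
  obtain ⟨k, hkodd, hk5, hk2, X, hXne, hXdisj, hXuni, hXarc⟩ := hQec
  haveI : NeZero k := ⟨by omega⟩
  have hXsub : ∀ i, X i ⊆ Q := fun i x hx => hXuni ▸ Set.mem_iUnion.mpr ⟨i, hx⟩
  have hmemX : ∀ p ∈ Q, ∃ i, p ∈ X i := fun p hp => Set.mem_iUnion.mp (hXuni ▸ hp)
  have arcX : ∀ (i : ZMod k), ∀ x ∈ X i, ∀ y ∈ X (i + 1), A x y :=
    fun i x hx y hy => (hXarc x (hXsub i hx) y (hXsub _ hy)).mpr ⟨i, hx, hy⟩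
  have hclass_ne : ∀ (c : ℕ), 0 < c → c < k → ∀ j : ZMod k, j - (c : ZMod k) ≠ j := by
    intro c hc1 hc2 j h
    have h0 : (c : ZMod k) = 0 := by
      have := sub_eq_self.mp h
      exact this
    have hdvd : k ∣ c := (ZMod.natCast_eq_zero_iff c k).mp h0
    exact absurd (Nat.le_of_dvd hc1 hdvd) (by omega)
  have h1ne : ∀ j : ZMod k, j - 1 ≠ j := by
    intro j
    have := hclass_ne 1 one_pos (by omega) j
    simpa using this
  have h2ne : ∀ j : ZMod k, j - 2 ≠ j := by
    intro j
    have := hclass_ne 2 (by omega) (by omega) j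
    simpa using this
  have h21 : ∀ j : ZMod k, j - 2 ≠ j - 1 := fun j h =>
    h1ne (j - 1) ((by ring : j - 1 - 1 = j - 2).trans h)
  have hvne : ∀ {i j : ZMod k}, i ≠ j → ∀ {x y : V}, x ∈ X i → y ∈ X j → x ≠ y :=
    fun hij _ _ hx hy hxy => Set.disjoint_left.mp (hXdisj _ _ hij) hx (hxy ▸ hy)
  -- step: a dominator of a vertex in class `j` dominates all of class `j - 2`
  have step : ∀ v ∉ Q, ∀ (j : ZMod k), ∀ q ∈ X j, A v q → ∀ p ∈ X (j - 2), A v p := by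
    intro v hvQ j q hq hvq p hp
    obtain ⟨w, hw⟩ := hXne (j - 1)
    have hpw : A p w := arcX (j - 2) p hp w (by rw [show j - 2 + 1 = j - 1 by ring]; exact hw)
    have hwq : A w q := arcX (j - 1) w hw q (by rw [show j - 1 + 1 = j by ring]; exact hq)
    have hvp : DAdj A p v := by
      refine hD p w q v ?_ ?_ ?_ ?_ ?_ ?_ hpw hwq hvq
      · exact hvne (h21 j) hp hw
      · exact hvne (h2ne j) hp hq
      · exact fun h => hvQ (h ▸ hXsub _ hp)
      · exact hvne (h1ne j) hw hq
      · exact fun h => hvQ (h ▸ hXsub _ hw)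
      · exact fun h => hvQ (h ▸ hXsub _ hq)
    rcases hvp with h | h
    · exact absurd (merge1 hQ (hXsub _ hq) (hXsub _ hp) h hvq) hvQ
    · exact h
  -- iterate the step
  have iter : ∀ v ∉ Q, ∀ (j : ZMod k), ∀ q ∈ X j, A v q →
      ∀ m : ℕ, ∀ p ∈ X (j - 2 * ((m : ZMod k) + 1)), A v p := by
    intro v hvQ j q hq hvq m
    induction m with
    | zero =>
      intro p hp
      have hcl : j - 2 * (((0 : ℕ) : ZMod k) + 1) = j - 2 := by push_cast; ring
      rw [hcl] at hp
      exact step v hvQ j q hq hvq p hp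
    | succ m ih =>
      intro p hp
      obtain ⟨q', hq'⟩ := hXne (j - 2 * ((m : ZMod k) + 1))
      have hcl : j - 2 * (((m + 1 : ℕ) : ZMod k) + 1)
          = (j - 2 * ((m : ZMod k) + 1)) - 2 := by push_cast; ring
      rw [hcl] at hp
      exact step v hvQ _ q' hq' (ih q' hq') p hp
  -- a dominator of some vertex of Q dominates all of Q
  have dom : ∀ v ∉ Q, (∃ q ∈ Q, A v q) → ∀ p ∈ Q, A v p := by
    intro v hvQ hex p hpQ
    obtain ⟨q, hqQ, hvq⟩ := hex
    obtain ⟨j, hq⟩ := hmemX q hqQ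
    obtain ⟨i, hp⟩ := hmemX p hpQ
    obtain ⟨n, hn1, hn2⟩ : ∃ n : ℕ, 1 ≤ n ∧ ((2 * n : ℕ) : ZMod k) = j - i := by
      have hd : (((j - i).val : ℕ) : ZMod k) = j - i := ZMod.natCast_rightInverse _
      set d := (j - i).val with hdd
      rcases Nat.eq_zero_or_pos d with hd0 | hdpos
      · refine ⟨k, by omega, ?_⟩
        have hji : j - i = 0 := by rw [← hd, hd0]; simp
        rw [hji]
        push_cast [ZMod.natCast_self]
        ring
      · rcases Nat.even_or_odd d with he | ho
        · refine ⟨d / 2, ?_, ?_⟩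
          · obtain ⟨r, hr⟩ := he; omega
          · rw [Nat.mul_div_cancel' he.two_dvd]
            exact hd
        · have hdvd : 2 ∣ (d + k) := by
            obtain ⟨a, ha⟩ := ho; obtain ⟨b, hb⟩ := hkodd; omega
          refine ⟨(d + k) / 2, by omega, ?_⟩
          rw [Nat.mul_div_cancel' hdvd, Nat.cast_add, ZMod.natCast_self, add_zero]
          exact hd
    have hcl : j - 2 * (((n - 1 : ℕ) : ZMod k) + 1) = i := by
      have h1 : ((n - 1 : ℕ) : ZMod k) + 1 = (n : ZMod k) := by
        conv_rhs => rw [show n = (n - 1) + 1 by omega]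
        push_cast
        ring
      rw [h1]
      have h2 : (2 : ZMod k) * (n : ZMod k) = j - i := by
        rw [← hn2]; push_cast; ring
      rw [h2]; ring
    exact iter v hvQ j q hq hvq (n - 1) p (by rw [hcl]; exact hp)
  -- the set of dominators of Q
  set S : Set V := {v | v ∉ Q ∧ ∃ q ∈ Q, A v q} with hSdef
  have domS : ∀ v ∈ S, ∀ p ∈ Q, A v p := fun v hv => dom v hv.1 hv.2
  -- dominators are pairwise adjacent
  have hSemi : ∀ v ∈ S, ∀ w ∈ S, v ≠ w → DAdj A v w := by
    intro v hv w hw hvw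
    obtain ⟨x, hx⟩ := hXne 0
    obtain ⟨y, hy⟩ := hXne 1
    have hxy : A x y := arcX 0 x hx y (by rw [zero_add]; exact hy)
    have h01 : (0 : ZMod k) ≠ 1 := by
      intro h
      exact h1ne 1 (by rw [← h]; ring)
    refine hD v x y w ?_ ?_ hvw ?_ ?_ ?_ (domS v hv x (hXsub _ hx)) hxy
      (domS w hw y (hXsub _ hy))
    · exact fun h => hv.1 (h ▸ hXsub _ hx)
    · exact fun h => hv.1 (h ▸ hXsub _ hy)
    · exact hvne h01 hx hy
    · exact fun h => hw.1 (h.symm ▸ hXsub _ hx)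
    · exact fun h => hw.1 (h.symm ▸ hXsub _ hy)
  -- S is closed under in-neighbours
  have closure : ∀ w s : V, A w s → s ∈ S → w ∈ S := by
    intro w s hws hs
    obtain ⟨q, hqQ, hsq⟩ := hs.2
    obtain ⟨i, hqX⟩ := hmemX q hqQ
    obtain ⟨q', hq'X⟩ := hXne (i - 1)
    have hq'Q : q' ∈ Q := hXsub _ hq'X
    have hq'q : A q' q := arcX (i - 1) q' hq'X q (by rw [show i - 1 + 1 = i by ring]; exact hqX)
    have hwQ : w ∉ Q := fun hwQ => hs.1 (merge1 hQ hqQ hwQ hws hsq)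
    have hws_ne : w ≠ s := fun h => hirr w (h ▸ hws)
    have hadj : DAdj A w q' := by
      refine hD w s q q' hws_ne (fun h => hwQ (h ▸ hqQ)) (fun h => hwQ (h ▸ hq'Q))
        (fun h => hs.1 (h ▸ hqQ)) (fun h => hs.1 (h ▸ hq'Q))
        (hvne (h1ne i).symm hqX hq'X) hws hsq hq'q
    rcases hadj with h | h
    · exact ⟨hwQ, q', hq'Q, h⟩
    · exact absurd (merge2 hQ hqQ hq'Q h hws hsq) hwQ
  -- any vertex outside Q reaching Q is in S
  have reachS : ∀ u v : V, Reach A u v → v ∈ Q → u ∉ Q → u ∈ S := by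
    intro u v h hv
    induction h using Relation.ReflTransGen.head_induction_on with
    | refl => exact fun h => absurd hv h
    | @head a c h' _ ih =>
      intro haQ
      by_cases hcQ : c ∈ Q
      · exact ⟨haQ, c, hcQ, h'⟩
      · exact closure _ _ h' (ih hcQ)
  -- existence of an initial component reaching Q
  obtain ⟨q0, hq0Q⟩ := hQ.1
  set B : V → Finset V := fun w => Finset.univ.filter (fun x => Reach A x w) with hBdef
  set T : Finset V := Finset.univ.filter (fun w => Reach A w q0) with hTdef
  have hq0T : q0 ∈ T := by
    simp only [hTdef, Finset.mem_filter, Finset.mem_univ, true_and]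
    exact .refl
  obtain ⟨u, huT, hmin⟩ := T.exists_min_image (fun w => (B w).card) ⟨q0, hq0T⟩
  have huq0 : Reach A u q0 := by
    simpa only [hTdef, Finset.mem_filter, Finset.mem_univ, true_and] using huT
  have hK0c : IsStrongComponent A (DComp A u) := dcomp_isStrongComponent u
  have hK0init : IsInitial A (DComp A u) := by
    intro v hv x hx havx
    have hvu : Reach A v u := ReflTransGen.head havx hx.2
    have hvT : v ∈ T := by
      simp only [hTdef, Finset.mem_filter, Finset.mem_univ, true_and]
      exact hvu.trans huq0
    have hsub : B v ⊆ B u := by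
      intro w hw
      simp only [hBdef, Finset.mem_filter, Finset.mem_univ, true_and] at hw ⊢
      exact hw.trans hvu
    have hne : u ∉ B v := by
      simp only [hBdef, Finset.mem_filter, Finset.mem_univ, true_and]
      intro huv
      exact hv ⟨huv, hvu⟩
    have huBu : u ∈ B u := by
      simp only [hBdef, Finset.mem_filter, Finset.mem_univ, true_and]
      exact .refl
    have hlt : (B v).card < (B u).card :=
      Finset.card_lt_card ((Finset.ssubset_iff_of_subset hsub).mpr ⟨u, huBu, hne⟩)
    have := hmin v hvT
    omega
  have huQ : u ∉ Q := by
    intro h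
    exact hQni (by rw [strongComponent_eq_dcomp hQ h]; exact hK0init)
  have huS : u ∈ S := reachS u q0 huq0 hq0Q huQ
  refine ⟨DComp A u, ⟨hK0c, hK0init, u, mem_dcomp_self u, q0, hq0Q, huq0⟩, ?_⟩
  rintro K ⟨hKc, hKinit, a, haK, b, hbQ, hab⟩
  have haQ : a ∉ Q := by
    intro haQ'
    have hKQ : K = Q :=
      (strongComponent_eq_dcomp hKc haK).trans (strongComponent_eq_dcomp hQ haQ').symm
    exact hQni (hKQ ▸ hKinit)
  have haS : a ∈ S := reachS a b hab hbQ haQ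
  by_cases hau : a = u
  · subst hau
    exact strongComponent_eq_dcomp hKc haK
  · rcases hSemi a haS u huS hau with h | h
    · by_cases haK0 : a ∈ DComp A u
      · exact (strongComponent_eq_dcomp hKc haK).trans
          (strongComponent_eq_dcomp hK0c haK0).symm
      · exact absurd h (hK0init a haK0 u (mem_dcomp_self u))
    · by_cases huK : u ∈ K
      · exact (strongComponent_eq_dcomp hKc huK).trans rfl
      · exact absurd h (hKinit u huK a haK)
end

section
/- Let D be a connected non-strong arc-locally in-semicomplete digraph and let Q be a non-initial strong component of D whose induced subdigraph is an odd extended cycle of length at least five. Then D has a clique cut, or V(D) admits a partition (V1, V(Q), V3) (with V3 possibly empty) such that: the subdigraph induced by V1 is semicomplete; every vertex of V1 dominates every vertex of V(Q) and there is no arc from V(Q) to V1; there is no arc from V3 to V1; there is no arc from V3 to V(Q); and the subdigraph induced by V3 is bipartite. -/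
variable {V : Type*}

/-- Auxiliary: `Wk A Rs W m x` says there is a directed walk of length `m`
from the source layer `Rs` to `x` whose vertices (after the start) lie in `W`. -/
def Wk (A : V → V → Prop) (Rs W : Set V) : ℕ → V → Prop
  | 0, x => x ∈ Rs
  | (m+1), x => x ∈ W ∧ ∃ y, Wk A Rs W m y ∧ A y x

/-- If `D` is connected non-strong arc-locally in-semicomplete
and `Q` is a non-initial strong component inducing an odd extended cycle of
length at least five, then `D` has a clique cut or `V(D)` admits a partition
`(V1, V(Q), V3)` with `D[V1]` semicomplete, `V1 ↦ V(Q)`, `V1 ⇒ V3`,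
`V(Q) ⇒ V3` and `D[V3]` bipartite (`V3` possibly empty). -/
theorem stmt_9 {V : Type*} [Fintype V] (A : V → V → Prop) (hirr : Irreflexive A)
    (hD : ArcLocallyIn A) (hconn : IsConnected' A) (hns : ¬ IsStrong A)
    (Q : Set V) (hQ : IsStrongComponent A Q) (hQni : ¬ IsInitial A Q)
    (hQec : IsOddExtCycle5On A Q) :
    HasCliqueCut A ∨
      ∃ V1 V3 : Set V, Disjoint V1 Q ∧ Disjoint V1 V3 ∧ Disjoint Q V3 ∧
        V1 ∪ Q ∪ V3 = Set.univ ∧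
        SemicompleteOn A V1 ∧
        (∀ u ∈ V1, ∀ v ∈ Q, A u v) ∧
        (∀ v ∈ Q, ∀ u ∈ V1, ¬ A v u) ∧
        (∀ w ∈ V3, ∀ u ∈ V1, ¬ A w u) ∧
        (∀ w ∈ V3, ∀ v ∈ Q, ¬ A w v) ∧
        BipartiteOn A V3 := by
  classical
  obtain ⟨k, hkodd, hk5, hk2, X, hXne, hXdisj, hXunion, hXarc⟩ := hQec
  haveI : NeZero k := ⟨by omega⟩
  have hQne := hQ.1
  have hQstrong := hQ.2.1
  have hQmax := hQ.2.2
  -- basic facts about the extended cycle structure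
  have hmemQ : ∀ {i : ZMod k} {x : V}, x ∈ X i → x ∈ Q := by
    intro i x hx
    rw [← hXunion]; exact Set.mem_iUnion.mpr ⟨i, hx⟩
  have hQX : ∀ {x : V}, x ∈ Q → ∃ i, x ∈ X i := by
    intro x hx; rw [← hXunion] at hx; exact Set.mem_iUnion.mp hx
  have hpart : ∀ {i j : ZMod k} {x : V}, x ∈ X i → x ∈ X j → i = j := by
    intro i j x hi hj
    by_contra hne
    exact Set.disjoint_left.mp (hXdisj i j hne) hi hj
  have hdiffX : ∀ {i j : ZMod k} {x y : V}, x ∈ X i → y ∈ X j → i ≠ j → x ≠ y := by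
    intro i j x y hx hy hne h
    exact hne (hpart (h ▸ hx) hy)
  have harcQ : ∀ {i : ZMod k} {x y : V}, x ∈ X i → y ∈ X (i+1) → A x y := by
    intro i x y hx hy
    exact (hXarc x (hmemQ hx) y (hmemQ hy)).mpr ⟨i, hx, hy⟩
  have harcQ' : ∀ {i j : ZMod k} {x y : V}, x ∈ X i → y ∈ X j → A x y → j = i + 1 := by
    intro i j x y hx hy h
    obtain ⟨i', h1, h2⟩ := (hXarc x (hmemQ hx) y (hmemQ hy)).mp h
    have e1 := hpart hx h1
    have e2 := hpart hy h2
    rw [e2, ← e1]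
  have hZ : ∀ c : ℕ, 0 < c → c < 5 → ((c:ℕ) : ZMod k) ≠ 0 := by
    intro c h1 h2 hc
    rw [ZMod.natCast_eq_zero_iff] at hc
    have := Nat.le_of_dvd h1 hc
    omega
  have e1 : ∀ i : ZMod k, i ≠ i + 1 := by
    intro i h
    exact hZ 1 (by norm_num) (by norm_num) (by push_cast; linear_combination -h)
  have e2 : ∀ i : ZMod k, i ≠ i + 2 := by
    intro i h
    exact hZ 2 (by norm_num) (by norm_num) (by push_cast; linear_combination -h)
  -- extension lemma: no arc from Q to a vertex dominating Q
  have hEXT1 : ∀ v, v ∉ Q → (∃ u ∈ Q, A v u) → ∀ x ∈ Q, ¬ A x v := by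
    intro v hvQ hex x hxQ hxv
    obtain ⟨u₀, hu₀Q, hvu₀⟩ := hex
    have hlift : ∀ {a b : V}, Relation.ReflTransGen (ArcOn A Q) a b →
        Relation.ReflTransGen (ArcOn A (insert v Q)) a b :=
      fun h => Relation.ReflTransGen.mono (fun a b hab =>
        ⟨Set.mem_insert_of_mem _ hab.1, Set.mem_insert_of_mem _ hab.2.1, hab.2.2⟩) _ _ h
    have hT : StrongOn A (insert v Q) := by
      intro a ha b hb
      have hva : ∀ c ∈ Q, Relation.ReflTransGen (ArcOn A (insert v Q)) v c :=
        fun c hc => (Relation.ReflTransGen.single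
          ⟨Set.mem_insert _ _, Set.mem_insert_of_mem _ hu₀Q, hvu₀⟩).trans
          (hlift (hQstrong u₀ hu₀Q c hc))
      have hav : ∀ c ∈ Q, Relation.ReflTransGen (ArcOn A (insert v Q)) c v :=
        fun c hc => (hlift (hQstrong c hc x hxQ)).trans (Relation.ReflTransGen.single
          ⟨Set.mem_insert_of_mem _ hxQ, Set.mem_insert _ _, hxv⟩)
      rcases Set.mem_insert_iff.mp ha with rfl | haQ
      · rcases Set.mem_insert_iff.mp hb with rfl | hbQ
        · exact .refl
        · exact hva b hbQ
      · rcases Set.mem_insert_iff.mp hb with rfl | hbQ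
        · exact hav a haQ
        · exact hlift (hQstrong a haQ b hbQ)
    exact hvQ (hQmax _ (Set.subset_insert _ _) hT (Set.mem_insert _ _))
  set S : Set V := {v | v ∉ Q ∧ ∃ u ∈ Q, A v u} with hSdef
  set W : Set V := {x | x ∉ Q ∧ x ∉ S} with hWdef
  have hSmem : ∀ {v}, v ∈ S → v ∉ Q ∧ ∃ u ∈ Q, A v u := fun h => h
  have hWmem : ∀ {x}, x ∈ W → x ∉ Q ∧ x ∉ S := fun h => h
  have hnoQS : ∀ q ∈ Q, ∀ v ∈ S, ¬ A q v :=
    fun q hq v hv h => hEXT1 v (hSmem hv).1 (hSmem hv).2 q hq h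
  have hnoWQ : ∀ w ∈ W, ∀ u ∈ Q, ¬ A w u :=
    fun w hw u hu h => (hWmem hw).2 ⟨(hWmem hw).1, u, hu, h⟩
  -- every vertex of S dominates all of Q
  have hP2 : ∀ v ∈ S, ∀ u ∈ Q, A v u := by
    intro v hv u huQ
    obtain ⟨hvQ, u₀, hu₀Q, hvu₀⟩ := hSmem hv
    obtain ⟨i₀, hu₀X⟩ := hQX hu₀Q
    have hstep : ∀ i : ZMod k, (∃ u', u' ∈ X i ∧ A v u') → ∀ x ∈ X (i - 2), A v x := by
      intro i hex x hxX
      obtain ⟨u', hu'X, hvu'⟩ := hex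
      obtain ⟨w, hwX⟩ := hXne (i - 1)
      have hw' : w ∈ X ((i-2)+1) := by rwa [show (i:ZMod k)-2+1 = i-1 by ring]
      have hu'' : u' ∈ X ((i-1)+1) := by rwa [show (i:ZMod k)-1+1 = i by ring]
      have haxw : A x w := harcQ hxX hw'
      have hawu : A w u' := harcQ hwX hu''
      have hDa := hD x w u' v
        (hdiffX hxX hwX (fun h => e1 (i-2) (by linear_combination h)))
        (hdiffX hxX hu'X (fun h => e2 (i-2) (by linear_combination h)))
        (fun h => hvQ (h ▸ hmemQ hxX))
        (hdiffX hwX hu'X (fun h => e1 (i-1) (by linear_combination h)))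
        (fun h => hvQ (h ▸ hmemQ hwX))
        (fun h => hvQ (h ▸ hmemQ hu'X))
        haxw hawu hvu'
      rcases hDa with h | h
      · exact (hEXT1 v hvQ ⟨u₀, hu₀Q, hvu₀⟩ x (hmemQ hxX) h).elim
      · exact h
    have hind : ∀ t : ℕ, ∀ x ∈ X (i₀ - 2 * ((t:ℕ):ZMod k) - 2), A v x := by
      intro t
      induction t with
      | zero =>
        intro x hx
        refine hstep i₀ ⟨u₀, hu₀X, hvu₀⟩ x ?_
        rwa [show i₀ - 2*(((0:ℕ)):ZMod k) - 2 = i₀ - 2 by push_cast; ring] at hx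
      | succ t ih =>
        obtain ⟨u', hu'⟩ := hXne (i₀ - 2*((t:ℕ):ZMod k) - 2)
        intro x hx
        refine hstep (i₀ - 2*((t:ℕ):ZMod k) - 2) ⟨u', hu', ih u' hu'⟩ x ?_
        rwa [show i₀ - 2*(((t+1:ℕ)):ZMod k) - 2 = (i₀ - 2*((t:ℕ):ZMod k) - 2) - 2 by
          push_cast; ring] at hx
    obtain ⟨j, hujX⟩ := hQX huQ
    obtain ⟨mm, hmm⟩ := hkodd
    have h2a : ((2 * ((k+1)/2) : ℕ) : ZMod k) = 1 := by
      have hh : 2 * ((k+1)/2) = k + 1 := by omega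
      rw [hh]
      push_cast [ZMod.natCast_self]
      ring
    have h2 : (2 : ZMod k) * (((k+1)/2 : ℕ) : ZMod k) = 1 := by
      push_cast at h2a
      exact h2a
    set bb : ZMod k := (((k+1)/2 : ℕ) : ZMod k) * (i₀ - j - 2) with hbdef
    have htb : ((bb.val : ℕ) : ZMod k) = bb := (ZMod.natCast_val bb).trans (ZMod.cast_id _ _)
    have hfinal : i₀ - 2 * ((bb.val : ℕ) : ZMod k) - 2 = j := by
      rw [htb, hbdef]
      linear_combination (-(i₀ - j - 2)) * h2
    exact hind bb.val u (by rwa [hfinal])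
  -- no arc from W to S
  have hnoWS : ∀ w ∈ W, ∀ v ∈ S, ¬ A w v := by
    intro w hw v hv hwv
    obtain ⟨hwQ, hwS⟩ := hWmem hw
    obtain ⟨w0, hw0⟩ := hXne 0
    obtain ⟨u1, hu1⟩ := hXne 1
    have h01 : u1 ∈ X ((0:ZMod k)+1) := by rwa [show (0:ZMod k)+1 = 1 by ring]
    have hvu1 : A v u1 := hP2 v hv u1 (hmemQ hu1)
    have hw0u1 : A w0 u1 := harcQ hw0 h01
    have hDa := hD w v u1 w0
      (fun h => hwS (h ▸ hv))
      (fun h => hwQ (h ▸ hmemQ hu1))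
      (fun h => hwQ (h ▸ hmemQ hw0))
      (fun h => (hSmem hv).1 (h ▸ hmemQ hu1))
      (fun h => (hSmem hv).1 (h ▸ hmemQ hw0))
      (hdiffX hu1 hw0 (fun h => e1 0 (by linear_combination -h)))
      hwv hvu1 hw0u1
    rcases hDa with h | h
    · exact hwS ⟨hwQ, w0, hmemQ hw0, h⟩
    · have hlift : ∀ {a b : V}, Relation.ReflTransGen (ArcOn A Q) a b →
          Relation.ReflTransGen (ArcOn A (insert w (insert v Q))) a b :=
        fun hh => Relation.ReflTransGen.mono (fun a b hab =>
          ⟨Set.mem_insert_of_mem _ (Set.mem_insert_of_mem _ hab.1),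
           Set.mem_insert_of_mem _ (Set.mem_insert_of_mem _ hab.2.1), hab.2.2⟩) _ _ hh
      have hwT : w ∈ insert w (insert v Q) := Set.mem_insert _ _
      have hvT : v ∈ insert w (insert v Q) := Set.mem_insert_of_mem _ (Set.mem_insert _ _)
      have hQT : ∀ c ∈ Q, c ∈ insert w (insert v Q) :=
        fun c hc => Set.mem_insert_of_mem _ (Set.mem_insert_of_mem _ hc)
      have hfromv : ∀ c ∈ Q, Relation.ReflTransGen (ArcOn A (insert w (insert v Q))) v c :=
        fun c hc => Relation.ReflTransGen.single ⟨hvT, hQT c hc, hP2 v hv c hc⟩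
      have hfromw : ∀ c ∈ Q, Relation.ReflTransGen (ArcOn A (insert w (insert v Q))) w c :=
        fun c hc => (Relation.ReflTransGen.single ⟨hwT, hvT, hwv⟩).trans (hfromv c hc)
      have htow : ∀ c ∈ Q, Relation.ReflTransGen (ArcOn A (insert w (insert v Q))) c w :=
        fun c hc => (hlift (hQstrong c hc w0 (hmemQ hw0))).trans
          (Relation.ReflTransGen.single ⟨hQT w0 (hmemQ hw0), hwT, h⟩)
      have htov : ∀ c ∈ Q, Relation.ReflTransGen (ArcOn A (insert w (insert v Q))) c v :=
        fun c hc => (htow c hc).trans (Relation.ReflTransGen.single ⟨hwT, hvT, hwv⟩)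
      have hT : StrongOn A (insert w (insert v Q)) := by
        intro a ha b hb
        rcases Set.mem_insert_iff.mp ha with rfl | ha'
        · rcases Set.mem_insert_iff.mp hb with rfl | hb'
          · exact .refl
          · rcases Set.mem_insert_iff.mp hb' with rfl | hbQ
            · exact Relation.ReflTransGen.single ⟨hwT, hvT, hwv⟩
            · exact hfromw b hbQ
        · rcases Set.mem_insert_iff.mp ha' with rfl | haQ
          · rcases Set.mem_insert_iff.mp hb with rfl | hb'
            · exact (hfromv w0 (hmemQ hw0)).trans (htow w0 (hmemQ hw0))
            · rcases Set.mem_insert_iff.mp hb' with rfl | hbQ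
              · exact .refl
              · exact hfromv b hbQ
          · rcases Set.mem_insert_iff.mp hb with rfl | hb'
            · exact htow a haQ
            · rcases Set.mem_insert_iff.mp hb' with rfl | hbQ
              · exact htov a haQ
              · exact hlift (hQstrong a haQ b hbQ)
      exact hwQ (hQmax _ (fun c hc => hQT c hc) hT hwT)
  -- S is semicomplete
  have hsemiS : SemicompleteOn A S := by
    intro v hv v' hv' hne
    obtain ⟨w0, hw0⟩ := hXne 0
    obtain ⟨u1, hu1⟩ := hXne 1
    have h01 : u1 ∈ X ((0:ZMod k)+1) := by rwa [show (0:ZMod k)+1 = 1 by ring]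
    exact hD v w0 u1 v'
      (fun h => (hSmem hv).1 (h ▸ hmemQ hw0))
      (fun h => (hSmem hv).1 (h ▸ hmemQ hu1))
      hne
      (hdiffX hw0 h01 (fun h => e1 0 (by linear_combination h)))
      (fun h => (hSmem hv').1 (h.symm ▸ hmemQ hw0))
      (fun h => (hSmem hv').1 (h.symm ▸ hmemQ hu1))
      (hP2 v hv w0 (hmemQ hw0)) (harcQ hw0 h01) (hP2 v' hv' u1 (hmemQ hu1))
  -- unique dominating part index for vertices of W
  have hI1 : ∀ z ∈ W, ∀ {i j : ZMod k} {u u' : V}, u ∈ X i → u' ∈ X j →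
      A u z → A u' z → i = j := by
    intro z hz i j u u' hu hu' h1 h2
    obtain ⟨hzQ, hzS⟩ := hWmem hz
    by_cases he : u = u'
    · exact hpart hu (he ▸ hu')
    · have H : ∀ {i j : ZMod k} {u u' : V}, u ∈ X i → u' ∈ X j → u ≠ u' →
          A u z → A u' z → j = i ∨ j = i - 2 ∨ j = i - 1 := by
        intro i j u u' hu hu' hne hA1 hA2
        obtain ⟨x, hx⟩ := hXne (i-1)
        by_cases hxu' : x = u'
        · right; right
          exact (hpart (hxu' ▸ hx) hu').symm
        · have hxu : A x u := harcQ hx (by rwa [show (i:ZMod k)-1+1 = i by ring])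
          have hDa := hD x u z u'
            (hdiffX hx hu (fun h => e1 (i-1) (by linear_combination h)))
            (fun h => hzQ (h ▸ hmemQ hx))
            hxu'
            (fun h => hzQ (h ▸ hmemQ hu))
            hne
            (fun h => hzQ (h ▸ hmemQ hu'))
            hxu hA1 hA2
          rcases hDa with h | h
          · left
            have := harcQ' hx hu' h
            rw [this]; ring
          · right; left
            have := harcQ' hu' hx h
            linear_combination -this
      have hj := H hu hu' he h1 h2
      have hi := H hu' hu (Ne.symm he) h2 h1
      rcases hj with h | h | h
      · exact h.symm
      · rcases hi with h' | h' | h'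
        · exact ((hZ 2 (by norm_num) (by norm_num)
            (by push_cast; linear_combination h + h'))).elim
        · exact ((hZ 4 (by norm_num) (by norm_num)
            (by push_cast; linear_combination h + h'))).elim
        · exact ((hZ 3 (by norm_num) (by norm_num)
            (by push_cast; linear_combination h + h'))).elim
      · rcases hi with h' | h' | h'
        · exact ((hZ 1 (by norm_num) (by norm_num)
            (by push_cast; linear_combination h + h'))).elim
        · exact ((hZ 3 (by norm_num) (by norm_num)
            (by push_cast; linear_combination h + h'))).elim
        · exact ((hZ 2 (by norm_num) (by norm_num)
            (by push_cast; linear_combination h + h'))).elim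
  -- in-neighbours (inside W) of Q-dominated vertices of W are fully dominated by X (i-1)
  have hF2 : ∀ z ∈ W, ∀ {i : ZMod k} {u}, u ∈ X i → A u z → ∀ y ∈ W, A y z →
      ∀ u'' ∈ X (i-1), A u'' y := by
    intro z hz i u hu huz y hy hyz u'' hu''
    have h1 : A u'' u := harcQ hu'' (by rwa [show (i:ZMod k)-1+1 = i by ring])
    have hDa := hD u'' u z y
      (hdiffX hu'' hu (fun h => e1 (i-1) (by linear_combination h)))
      (fun h => (hWmem hz).1 (h ▸ hmemQ hu''))
      (fun h => (hWmem hy).1 (h ▸ hmemQ hu''))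
      (fun h => (hWmem hz).1 (h ▸ hmemQ hu))
      (fun h => (hWmem hy).1 (h ▸ hmemQ hu))
      (fun h => hirr _ (h ▸ hyz))
      h1 huz hyz
    rcases hDa with h | h
    · exact h
    · exact (hnoWQ y hy u'' (hmemQ hu'') h).elim
  -- and such in-neighbours have no in-neighbours inside W
  have hF3 : ∀ z ∈ W, ∀ u ∈ Q, A u z → ∀ y ∈ W, A y z → ∀ y' ∈ W, ¬ A y' y := by
    intro z hz u huQ huz y hy hyz y' hy' hy'y
    obtain ⟨i, hu⟩ := hQX huQ
    obtain ⟨u1, hu1⟩ := hXne (i-1)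
    have hu1y : A u1 y := hF2 z hz hu huz y hy hyz u1 hu1
    by_cases hyz' : y' = z
    · subst hyz'
      obtain ⟨u2, hu2⟩ := hXne (i-1-1)
      have hu2z : A u2 y' := hF2 y hy hu1 hu1y y' hz hy'y u2 hu2
      have hik := hI1 y' hz hu hu2 huz hu2z
      exact hZ 2 (by norm_num) (by norm_num) (by push_cast; linear_combination hik)
    · have hDa := hD y' y z u
        (fun h => hirr _ (h ▸ hy'y))
        hyz'
        (fun h => (hWmem hy').1 (h ▸ hmemQ hu))
        (fun h => hirr _ (h ▸ hyz))
        (fun h => (hWmem hy).1 (h ▸ hmemQ hu))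
        (fun h => (hWmem hz).1 (h ▸ hmemQ hu))
        hy'y hyz huz
      rcases hDa with h | h
      · exact hnoWQ y' hy' u huQ h
      · obtain ⟨u2, hu2⟩ := hXne (i-1-1)
        have hu2y' : A u2 y' := hF2 y hy hu1 hu1y y' hy' hy'y u2 hu2
        have hik := hI1 y' hy' hu hu2 h hu2y'
        exact hZ 2 (by norm_num) (by norm_num) (by push_cast; linear_combination hik)
  -- the source layer
  set Rs : Set V := {z | z ∈ W ∧ (∃ u ∈ Q, A u z) ∧ ∀ y ∈ W, ¬ A y z} with hRsdef
  have hRsmem : ∀ {z}, z ∈ Rs → z ∈ W ∧ (∃ u ∈ Q, A u z) ∧ ∀ y ∈ W, ¬ A y z := fun h => h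
  have hWk3 : ∀ m x, Wk A Rs W m x → x ∈ W := by
    intro m x h
    cases m with
    | zero => exact (hRsmem h).1
    | succ m => exact h.1
  have hWk1 : ∀ z ∈ W, (∃ u ∈ Q, A u z) → ∃ m, Wk A Rs W m z := by
    intro z hz hex
    by_cases hzs : z ∈ Rs
    · exact ⟨0, hzs⟩
    · obtain ⟨u, huQ, huz⟩ := hex
      have hy : ∃ y ∈ W, A y z := by
        by_contra hno
        push_neg at hno
        exact hzs ⟨hz, ⟨u, huQ, huz⟩, hno⟩
      obtain ⟨y, hyW, hyz⟩ := hy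
      obtain ⟨i, hu⟩ := hQX huQ
      obtain ⟨u1, hu1⟩ := hXne (i-1)
      have hysrc : y ∈ Rs := ⟨hyW, ⟨u1, hmemQ hu1, hF2 z hz hu huz y hyW hyz u1 hu1⟩,
        fun y' hy' h => hF3 z hz u huQ huz y hyW hyz y' hy' h⟩
      exact ⟨1, hz, y, hysrc, hyz⟩
  -- KEY: no arc goes backward (or level) with respect to walk-distance from Rs
  have hBAD : ∀ s : ℕ, ∀ x y, x ∈ W → y ∈ W → A y x → Wk A Rs W s x →
      (∀ m, Wk A Rs W m x → s ≤ m) → (∀ m, Wk A Rs W m y → s ≤ m) → False := by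
    intro s
    induction s using Nat.strong_induction_on with
    | _ s IH =>
    intro x y hxW hyW hyx hWx hminx hminy
    match s, hWx, hminx, hminy, IH with
    | 0, hWx, hminx, hminy, IH =>
      exact (hRsmem hWx).2.2 y hyW hyx
    | 1, hWx, hminx, hminy, IH =>
      obtain ⟨hxW', t, htRs, htx⟩ := hWx
      obtain ⟨htW, ⟨u, huQ, hut⟩, htno⟩ := hRsmem htRs
      obtain ⟨i, hu⟩ := hQX huQ
      have hyt : y ≠ t := by
        intro h
        have := hminy 0 (h ▸ htRs)
        omega
      have hDa := hD u t x y
        (fun h => htW.1 (h ▸ hmemQ hu))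
        (fun h => hxW.1 (h ▸ hmemQ hu))
        (fun h => hyW.1 (h ▸ hmemQ hu))
        (fun h => hirr _ (h ▸ htx))
        (Ne.symm hyt)
        (fun h => hirr _ (h ▸ hyx))
        hut htx hyx
      have huy : A u y := by
        rcases hDa with h | h
        · exact h
        · exact (hnoWQ y hyW u huQ h).elim
      have hwex : ∃ w ∈ W, A w y := by
        by_contra hno
        push_neg at hno
        have h0 : Wk A Rs W 0 y := show y ∈ Rs from ⟨hyW, ⟨u, huQ, huy⟩, hno⟩
        have := hminy 0 h0
        omega
      obtain ⟨w, hwW, hwy⟩ := hwex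
      obtain ⟨u1, hu1⟩ := hXne (i-1)
      have hu1w : A u1 w := hF2 y hyW hu huy w hwW hwy u1 hu1
      have hwno : ∀ y' ∈ W, ¬ A y' w := fun y' hy' h => hF3 y hyW u huQ huy w hwW hwy y' hy' h
      have hwx : w ≠ x := by
        intro h
        subst h
        obtain ⟨u2, hu2⟩ := hXne (i-1-1)
        have hu2t : A u2 t := hF2 w hwW hu1 hu1w t htW htx u2 hu2
        have hik := hI1 t htW hu hu2 hut hu2t
        exact hZ 2 (by norm_num) (by norm_num) (by push_cast; linear_combination hik)
      have hwt : w ≠ t := by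
        intro h
        have h2 : A u1 t := h ▸ hu1w
        have hik := hI1 t htW hu hu1 hut h2
        exact hZ 1 (by norm_num) (by norm_num) (by push_cast; linear_combination hik)
      have hDb := hD w y x t
        (fun h => hirr _ (h ▸ hwy))
        hwx
        hwt
        (fun h => hirr _ (h ▸ hyx))
        hyt
        (fun h => hirr _ (h.symm ▸ htx))
        hwy hyx htx
      rcases hDb with h | h
      · exact htno w hwW h
      · exact hwno t htW h
    | (s+2), hWx, hminx, hminy, IH =>
      obtain ⟨hxW', t, hWt, htx⟩ := hWx
      have hWtc := hWt
      obtain ⟨htW2, p, hWp, hpt⟩ := hWtc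
      have htW := hWk3 _ _ hWt
      have hpW := hWk3 _ _ hWp
      have hty : t ≠ y := by
        intro h
        have := hminy (s+1) (h ▸ hWt)
        omega
      have hpx : p ≠ x := by
        intro h
        have := hminx s (h ▸ hWp)
        omega
      have hpy : p ≠ y := by
        intro h
        have := hminy s (h ▸ hWp)
        omega
      have hDa := hD p t x y
        (fun h => hirr _ (h ▸ hpt))
        hpx
        hpy
        (fun h => hirr _ (h ▸ htx))
        hty
        (fun h => hirr _ (h ▸ hyx))
        hpt htx hyx
      rcases hDa with h | h
      · have hWy1 : Wk A Rs W (s+1) y := ⟨hyW, p, hWp, h⟩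
        have := hminy (s+1) hWy1
        omega
      · have hrp : ∃ m, Wk A Rs W m p := ⟨s, hWp⟩
        have hsple : Nat.find hrp ≤ s := Nat.find_min' hrp hWp
        exact IH (Nat.find hrp) (by omega) p y hpW hyW h (Nat.find_spec hrp)
          (fun m hm => Nat.find_min' hrp hm)
          (fun m hm => by have := hminy m hm; omega)
  have hlev : ∀ x y, x ∈ W → y ∈ W → A y x →
      ∀ (hry : ∃ m, Wk A Rs W m y) (hrx : ∃ m, Wk A Rs W m x),
      Nat.find hrx = Nat.find hry + 1 := by
    intro x y hxW hyW hyx hry hrx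
    have hle : Nat.find hrx ≤ Nat.find hry + 1 :=
      Nat.find_min' hrx ⟨hxW, y, Nat.find_spec hry, hyx⟩
    have hlt : ¬ Nat.find hrx ≤ Nat.find hry := by
      intro hcle
      exact hBAD (Nat.find hrx) x y hxW hyW hyx (Nat.find_spec hrx)
        (fun m hm => Nat.find_min' hrx hm)
        (fun m hm => le_trans hcle (Nat.find_min' hry hm))
    omega
  have hparity : ∀ m x (h : ∃ m', Wk A Rs W m' x), Wk A Rs W m x →
      m % 2 = Nat.find h % 2 := by
    intro m
    induction m with
    | zero =>
      intro x h hW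
      have := Nat.find_min' h hW
      omega
    | succ m ihm =>
      intro x h hW
      obtain ⟨hxW, y, hWy, hyx⟩ := hW
      have hy : ∃ m', Wk A Rs W m' y := ⟨m, hWy⟩
      have h1 := ihm y hy hWy
      have h2 := hlev x y hxW (hWk3 m y hWy) hyx hy h
      omega
  set E3 : V → V → Prop := fun a b => a ∈ W ∧ b ∈ W ∧ DAdj A a b with hE3def
  have hE3symm : ∀ {a b}, E3 a b → E3 b a := fun h => ⟨h.2.1, h.1, h.2.2.symm⟩
  have hRTGsymm : ∀ {a b}, Relation.ReflTransGen E3 a b → Relation.ReflTransGen E3 b a := by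
    intro a b h
    induction h with
    | refl => exact .refl
    | tail _ h2 ih => exact Relation.ReflTransGen.head (hE3symm h2) ih
  have hstepreach : ∀ a b, E3 a b → (∃ m, Wk A Rs W m a) → ∃ m, Wk A Rs W m b := by
    intro a b he hra
    obtain ⟨haW, hbW, hadj⟩ := he
    rcases hadj with h | h
    · exact ⟨Nat.find hra + 1, hbW, a, Nat.find_spec hra, h⟩
    · by_contra hno
      exact hBAD (Nat.find hra) a b haW hbW h (Nat.find_spec hra)
        (fun m hm => Nat.find_min' hra hm) (fun m hm => (hno ⟨m, hm⟩).elim)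
  have hreachRTG : ∀ a b, Relation.ReflTransGen E3 a b →
      (∃ m, Wk A Rs W m a) → ∃ m, Wk A Rs W m b := by
    intro a b h hra
    induction h with
    | refl => exact hra
    | tail _ h2 ih => exact hstepreach _ _ h2 ih
  have hend : ∀ {a b}, Relation.ReflTransGen E3 a b → a ∈ W → b ∈ W := by
    intro a b h haW
    induction h with
    | refl => exact haW
    | tail _ h2 _ => exact h2.2.1
  by_cases hbip : ∀ w ∈ W, ∃ q ∈ Q, ∃ z, Relation.ReflTransGen E3 w z ∧ A q z
  · -- every component of W receives an arc from Q ⇒ W is bipartite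
    right
    refine ⟨S, W, ?_, ?_, ?_, ?_, hsemiS, hP2, hnoQS, hnoWS, hnoWQ, ?_⟩
    · exact Set.disjoint_left.mpr (fun x hx hxQ => (hSmem hx).1 hxQ)
    · exact Set.disjoint_left.mpr (fun x hx hxW => (hWmem hxW).2 hx)
    · exact Set.disjoint_left.mpr (fun x hx hxW => (hWmem hxW).1 hx)
    · ext x
      simp only [Set.mem_union, Set.mem_univ, iff_true]
      by_cases h1 : x ∈ Q
      · exact Or.inl (Or.inr h1)
      · by_cases h2 : x ∈ S
        · exact Or.inl (Or.inl h2)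
        · exact Or.inr ⟨h1, h2⟩
    · -- bipartite
      have hreach : ∀ a ∈ W, ∃ m, Wk A Rs W m a := by
        intro a haW
        obtain ⟨q, hqQ, z, hrtg, hqz⟩ := hbip a haW
        have hzW := hend hrtg haW
        exact hreachRTG z a (hRTGsymm hrtg) (hWk1 z hzW ⟨q, hqQ, hqz⟩)
      set T : Set V := {x | ∃ m, Odd m ∧ Wk A Rs W m x} with hTdef
      have hmemT : ∀ a (hra : ∃ m, Wk A Rs W m a), (a ∈ T ↔ Odd (Nat.find hra)) := by
        intro a hra
        constructor
        · rintro ⟨m, hmo, hmw⟩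
          have := hparity m a hra hmw
          rw [Nat.odd_iff] at hmo ⊢
          omega
        · intro h
          exact ⟨Nat.find hra, h, Nat.find_spec hra⟩
      have harc : ∀ a ∈ W, ∀ b ∈ W, A a b → ((a ∈ T ∧ b ∉ T) ∨ (a ∉ T ∧ b ∈ T)) := by
        intro a haW b hbW hab
        have hra := hreach a haW
        have hrb : ∃ m, Wk A Rs W m b := ⟨Nat.find hra + 1, hbW, a, Nat.find_spec hra, hab⟩
        have hlv := hlev b a hbW haW hab hra hrb
        by_cases hodd : Odd (Nat.find hra)
        · left
          refine ⟨(hmemT a hra).mpr hodd, fun hbT => ?_⟩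
          have hob := (hmemT b hrb).mp hbT
          rw [hlv] at hob
          exact (Nat.odd_add_one.mp hob) hodd
        · right
          refine ⟨fun haT => hodd ((hmemT a hra).mp haT), (hmemT b hrb).mpr ?_⟩
          rw [hlv]
          exact Nat.odd_add_one.mpr hodd
      refine ⟨T, ?_⟩
      intro a haW b hbW hadj
      rcases hadj with h | h
      · exact harc a haW b hbW h
      · rcases harc b hbW a haW h with ⟨h1, h2⟩ | ⟨h1, h2⟩
        · exact Or.inr ⟨h2, h1⟩
        · exact Or.inl ⟨h2, h1⟩
  · -- some component of W receives no arc from Q ⇒ S is a clique cut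
    left
    push_neg at hbip
    obtain ⟨w, hwW, hnoQarc⟩ := hbip
    refine ⟨S, hsemiS, ?_⟩
    intro hc
    obtain ⟨u0, hu0Q⟩ := hQne
    have hwSc : w ∈ Sᶜ := (hWmem hwW).2
    have huSc : u0 ∈ Sᶜ := fun h => (hSmem h).1 hu0Q
    have hcon := hc w hwSc u0 huSc
    have hinv : ∀ x, Relation.ReflTransGen (fun a b => a ∈ Sᶜ ∧ b ∈ Sᶜ ∧ DAdj A a b) w x →
        Relation.ReflTransGen E3 w x ∧ x ∈ W := by
      intro x h
      induction h with
      | refl => exact ⟨.refl, hwW⟩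
      | @tail b c _ h2 ih =>
        obtain ⟨hrtg, hbW⟩ := ih
        obtain ⟨hb1, hc1, hadj⟩ := h2
        have hcW : c ∈ W := by
          by_cases hcQ : c ∈ Q
          · exfalso
            rcases hadj with ha | ha
            · exact hnoWQ b hbW c hcQ ha
            · exact hnoQarc c hcQ b hrtg ha
          · exact ⟨hcQ, hc1⟩
        exact ⟨hrtg.tail ⟨hbW, hcW, hadj⟩, hcW⟩
    obtain ⟨_, hu0W⟩ := hinv u0 hcon
    exact (hWmem hu0W).1 hu0Q
end

section
/- Let D be a connected arc-locally semicomplete digraph. If D contains a strong component Q whose induced subdigraph is an odd extended cycle of length at least five, then V(D) = V(Q), i.e., D itself is that odd extended cycle. -/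
variable {V : Type*}

/-- If the digraph is connected and `Q` is nonempty but not everything, there is a
boundary adjacency: some `v ∉ Q` adjacent to some `u ∈ Q`. -/
lemma aux_boundary {V : Type*} (A : V → V → Prop) (Q : Set V) (hconn : IsConnected' A)
    (hQne : Q.Nonempty) {w : V} (hw : w ∉ Q) :
    ∃ v, v ∉ Q ∧ ∃ u ∈ Q, DAdj A u v := by
  obtain ⟨u, hu⟩ := hQne
  have key : ∀ w', Relation.ReflTransGen
      (fun x y => x ∈ (Set.univ : Set V) ∧ y ∈ (Set.univ : Set V) ∧ DAdj A x y) u w' →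
      w' ∉ Q → ∃ v, v ∉ Q ∧ ∃ u' ∈ Q, DAdj A u' v := by
    intro w' h
    induction h with
    | refl => intro h'; exact absurd hu h'
    | @tail b c hab hbc ih =>
      intro hc
      by_cases hb : b ∈ Q
      · exact ⟨c, hc, b, hb, hbc.2.2⟩
      · exact ih hb
  exact key w (hconn u trivial w trivial) hw

/-- A strong component admits no vertex outside with arcs both into and out of it. -/
lemma aux_onesided {V : Type*} (A : V → V → Prop) (Q : Set V)
    (hQ : IsStrongComponent A Q) {v u u' : V} (hv : v ∉ Q) (hu : u ∈ Q) (hu' : u' ∈ Q)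
    (hvu : A v u) (hu'v : A u' v) : False := by
  have hT : True := trivial
  have lift : ∀ {x y : V}, Relation.ReflTransGen (ArcOn A Q) x y →
      Relation.ReflTransGen (ArcOn A (insert v Q)) x y := fun h =>
    Relation.ReflTransGen.mono (r := ArcOn A Q) (p := ArcOn A (insert v Q))
      (fun a b hab => ⟨Set.mem_insert_of_mem _ hab.1,
      Set.mem_insert_of_mem _ hab.2.1, hab.2.2⟩) _ _ h
  have hto : ∀ x ∈ insert v Q, Relation.ReflTransGen (ArcOn A (insert v Q)) x v := by
    intro x hx
    rcases Set.mem_insert_iff.mp hx with h | h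
    · subst h; exact Relation.ReflTransGen.refl
    · exact Relation.ReflTransGen.tail (lift (hQ.2.1 x h u' hu'))
        ⟨Set.mem_insert_of_mem _ hu', Set.mem_insert _ _, hu'v⟩
  have hfrom : ∀ y ∈ insert v Q, Relation.ReflTransGen (ArcOn A (insert v Q)) v y := by
    intro y hy
    rcases Set.mem_insert_iff.mp hy with h | h
    · subst h; exact Relation.ReflTransGen.refl
    · exact Relation.ReflTransGen.head
        ⟨Set.mem_insert _ _, Set.mem_insert_of_mem _ hu, hvu⟩
        (lift (hQ.2.1 u hu y h))
  have hTst : StrongOn A (insert v Q) := fun x hx y hy =>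
    (hto x hx).trans (hfrom y hy)
  exact hv (hQ.2.2 (insert v Q) (Set.subset_insert v Q) hTst (Set.mem_insert v Q))

/-- If a connected arc-locally semicomplete digraph contains a
strong component `Q` inducing an odd extended cycle of length at least five,
then `V(D) = V(Q)`. -/
theorem stmt_12 {V : Type*} [Fintype V] (A : V → V → Prop) (hirr : Irreflexive A)
    (hin : ArcLocallyIn A) (hout : ArcLocallyOut A) (hconn : IsConnected' A)
    (Q : Set V) (hQ : IsStrongComponent A Q) (hQec : IsOddExtCycle5On A Q) :
    Q = Set.univ := by
  by_contra hneu
  have hex : ∃ w, w ∉ Q := by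
    by_contra h
    push_neg at h
    exact hneu (Set.eq_univ_of_forall h)
  obtain ⟨w, hw⟩ := hex
  obtain ⟨v, hv, u0, hu0, hadj0⟩ := aux_boundary A Q hconn hQ.1 hw
  obtain ⟨k, hodd, hk5, hk2, X, hXne, hXdisj, hXun, hXarc⟩ := hQec
  haveI : NeZero k := ⟨by omega⟩
  obtain ⟨t, ht⟩ := hodd
  -- basic helpers about the extended-cycle structure
  have hXsub : ∀ i, X i ⊆ Q := by
    intro i
    rw [← hXun]
    exact Set.subset_iUnion X i
  have hmem : ∀ u ∈ Q, ∃ i, u ∈ X i := by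
    intro u hu
    rw [← hXun] at hu
    exact Set.mem_iUnion.mp hu
  have huniq : ∀ {a : V} {i j : ZMod k}, a ∈ X i → a ∈ X j → i = j := by
    intro a i j h1 h2
    by_contra h
    exact Set.disjoint_left.mp (hXdisj i j h) h1 h2
  have hdiff : ∀ {a b : V} {i j : ZMod k}, a ∈ X i → b ∈ X j → i ≠ j → a ≠ b := by
    intro a b i j ha hb hij
    rintro rfl
    exact hij (huniq ha hb)
  have hcst : ∀ c : ℕ, 0 < c → c < k → (c : ZMod k) ≠ 0 := by
    intro c h1 h2 h
    have := (ZMod.natCast_eq_zero_iff c k).mp h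
    have := Nat.le_of_dvd h1 this
    omega
  have h10 : (1 : ZMod k) ≠ 0 := by
    have := hcst 1 (by omega) (by omega); simpa using this
  have h20 : (2 : ZMod k) ≠ 0 := by
    have := hcst 2 (by omega) (by omega); simpa using this
  have h30 : (3 : ZMod k) ≠ 0 := by
    have := hcst 3 (by omega) (by omega); simpa using this
  have hadd : ∀ (i c : ZMod k), c ≠ 0 → i ≠ i + c := by
    intro i c hc h
    exact hc (left_eq_add.mp h)
  have harc : ∀ {a b : V} {i : ZMod k}, a ∈ X i → b ∈ X (i + 1) → A a b := by
    intro a b i ha hb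
    exact (hXarc a (hXsub _ ha) b (hXsub _ hb)).mpr ⟨i, ha, hb⟩
  have hnoarc : ∀ {a c : V} {i : ZMod k}, a ∈ X i → c ∈ X (i + 2) → ¬ DAdj A a c := by
    intro a c i ha hc hd
    rcases hd with h | h
    · obtain ⟨i', ha', hc'⟩ := (hXarc a (hXsub _ ha) c (hXsub _ hc)).mp h
      have e1 : i = i' := huniq ha ha'
      subst e1
      have e2 : i + 1 = i + 2 := huniq hc' hc
      exact h10 (by linear_combination - e2)
    · obtain ⟨i', hc', ha'⟩ := (hXarc c (hXsub _ hc) a (hXsub _ ha)).mp h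
      have e1 : i + 2 = i' := huniq hc hc'
      subst e1
      have e2 : i = i + 2 + 1 := huniq ha ha'
      exact h30 (by linear_combination - e2)
  have hnev : ∀ {a : V} {i : ZMod k}, a ∈ X i → a ≠ v := by
    intro a i ha h
    exact hv (h ▸ hXsub _ ha)
  -- a natural number `n` with `2*n ≡ d (mod k)`, using that `k` is odd
  have htwo : ∀ d : ZMod k, ∃ n : ℕ, (2 * (n : ZMod k)) = d := by
    intro d
    refine ⟨d.val * (t + 1), ?_⟩
    have hk0 : ((k : ℕ) : ZMod k) = 0 := ZMod.natCast_self k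
    have hdv : ((d.val : ℕ) : ZMod k) = d := ZMod.natCast_zmod_val d
    push_cast
    rw [hdv]
    have : (2 : ZMod k) * ((t : ZMod k) + 1) = (k : ZMod k) + 1 := by
      rw [ht]; push_cast; ring
    calc 2 * (d * ((t : ZMod k) + 1)) = d * (2 * ((t : ZMod k) + 1)) := by ring
      _ = d * ((k : ZMod k) + 1) := by rw [this]
      _ = d := by rw [hk0]; ring
  -- split: `v` sends only into `Q`, or receives only from `Q`
  rcases hadj0 with hstart | hstart
  · -- Case B : `u0 → v`, so no arc from `v` into `Q`
    have hnoVQ : ∀ u ∈ Q, ¬ A v u := by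
      intro u hu hvu
      exact aux_onesided A Q hQ hv hu hu0 hvu hstart
    obtain ⟨j, hj⟩ := hmem u0 hu0
    have hstepB : ∀ i : ZMod k, (∃ u ∈ X i, A u v) → ∃ b ∈ X (i + 2), A b v := by
      intro i ⟨u, hu, huv⟩
      obtain ⟨a, ha⟩ := hXne (i + 1)
      obtain ⟨b, hb⟩ := hXne (i + 2)
      have hua : A u a := harc hu ha
      have hab : A a b := harc ha (by rw [show i + 1 + 1 = i + 2 by ring]; exact hb)
      have h1 : v ≠ u := fun h => hnev hu h.symm
      have h2 : v ≠ a := fun h => hnev ha h.symm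
      have h3 : v ≠ b := fun h => hnev hb h.symm
      have h4 : u ≠ a := hdiff hu ha (hadd i 1 h10)
      have h5 : u ≠ b := hdiff hu hb (hadd i 2 h20)
      have h6 : a ≠ b := hdiff ha hb (by
        intro h
        have e : i + 1 = i + 2 := h
        exact h10 (by linear_combination - e))
      rcases hout v u a b h1 h2 h3 h4 h5 h6 huv hua hab with h | h
      · exact absurd h (hnoVQ b (hXsub _ hb))
      · exact ⟨b, hb, h⟩
    have hAll : ∀ n : ℕ, ∃ u ∈ X (j + 2 * (n : ZMod k)), A u v := by
      intro n
      induction n with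
      | zero =>
        have e : j + 2 * ((0 : ℕ) : ZMod k) = j := by push_cast; ring
        rw [e]; exact ⟨u0, hj, hstart⟩
      | succ n ih =>
        obtain ⟨b, hb, hbv⟩ := hstepB _ ih
        refine ⟨b, ?_, hbv⟩
        rw [show j + 2 * (((n + 1 : ℕ)) : ZMod k) = j + 2 * ((n : ℕ) : ZMod k) + 2 by
          push_cast; ring]
        exact hb
    have hcover : ∀ i : ZMod k, ∃ u ∈ X i, A u v := by
      intro i
      obtain ⟨n, hn⟩ := htwo (i - j)
      have e : j + 2 * (n : ZMod k) = i := by rw [hn]; ring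
      exact e ▸ hAll n
    obtain ⟨a, ha, hav⟩ := hcover 0
    obtain ⟨b, hb, hbv⟩ := hcover 1
    obtain ⟨c, hc, hcv⟩ := hcover 2
    have hab : A a b := harc ha (by rw [show (0 : ZMod k) + 1 = 1 by ring]; exact hb)
    have h1 : a ≠ b := hdiff ha hb (fun h => h10 h.symm)
    have h2 : a ≠ v := hnev ha
    have h3 : a ≠ c := hdiff ha hc (fun h => h20 h.symm)
    have h4 : b ≠ v := hnev hb
    have h5 : b ≠ c := hdiff hb hc (fun h => h10 (by linear_combination - h))
    have h6 : v ≠ c := fun h => hnev hc h.symm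
    have hdadj := hin a b v c h1 h2 h3 h4 h5 h6 hab hbv hcv
    exact hnoarc ha (show c ∈ X ((0 : ZMod k) + 2) by
      rw [show (0 : ZMod k) + 2 = 2 by ring]; exact hc) hdadj
  · -- Case A : `v → u0`, so no arc from `Q` into `v`
    have hnoQV : ∀ u ∈ Q, ¬ A u v := by
      intro u hu huv
      exact aux_onesided A Q hQ hv hu0 hu hstart huv
    obtain ⟨j, hj⟩ := hmem u0 hu0
    have hstepA : ∀ i : ZMod k, (∃ u ∈ X i, A v u) → ∃ b ∈ X (i - 2), A v b := by
      intro i ⟨u, hu, hvu⟩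
      obtain ⟨a, ha⟩ := hXne (i - 1)
      obtain ⟨b, hb⟩ := hXne (i - 2)
      have hba : A b a := harc hb (by rw [show i - 2 + 1 = i - 1 by ring]; exact ha)
      have hau : A a u := harc ha (by rw [show i - 1 + 1 = i by ring]; exact hu)
      have h1 : b ≠ a := hdiff hb ha (by
        intro h
        exact h10 (by linear_combination - h))
      have h2 : b ≠ u := hdiff hb hu (by
        intro h
        exact h20 (by linear_combination - h))
      have h3 : b ≠ v := hnev hb
      have h4 : a ≠ u := hdiff ha hu (by
        intro h
        exact h10 (by linear_combination - h))
      have h5 : a ≠ v := hnev ha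
      have h6 : u ≠ v := hnev hu
      rcases hin b a u v h1 h2 h3 h4 h5 h6 hba hau hvu with h | h
      · exact absurd h (hnoQV b (hXsub _ hb))
      · exact ⟨b, hb, h⟩
    have hAll : ∀ n : ℕ, ∃ u ∈ X (j - 2 * (n : ZMod k)), A v u := by
      intro n
      induction n with
      | zero =>
        have e : j - 2 * ((0 : ℕ) : ZMod k) = j := by push_cast; ring
        rw [e]; exact ⟨u0, hj, hstart⟩
      | succ n ih =>
        obtain ⟨b, hb, hvb⟩ := hstepA _ ih
        refine ⟨b, ?_, hvb⟩
        rw [show j - 2 * (((n + 1 : ℕ)) : ZMod k) = j - 2 * ((n : ℕ) : ZMod k) - 2 by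
          push_cast; ring]
        exact hb
    have hcover : ∀ i : ZMod k, ∃ u ∈ X i, A v u := by
      intro i
      obtain ⟨n, hn⟩ := htwo (j - i)
      have e : j - 2 * (n : ZMod k) = i := by rw [hn]; ring
      exact e ▸ hAll n
    obtain ⟨a, ha, hva⟩ := hcover 0
    obtain ⟨b, hb, hvb⟩ := hcover 1
    obtain ⟨c, hc⟩ := hXne 2
    have hbc : A b c := harc hb (by rw [show (1 : ZMod k) + 1 = 2 by ring]; exact hc)
    have h1 : a ≠ v := hnev ha
    have h2 : a ≠ b := hdiff ha hb (fun h => h10 h.symm)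
    have h3 : a ≠ c := hdiff ha hc (fun h => h20 h.symm)
    have h4 : v ≠ b := fun h => hnev hb h.symm
    have h5 : v ≠ c := fun h => hnev hc h.symm
    have h6 : b ≠ c := hdiff hb hc (fun h => h10 (by linear_combination - h))
    have hdadj := hout a v b c h1 h2 h3 h4 h5 h6 hva hvb hbc
    exact hnoarc ha (show c ∈ X ((0 : ZMod k) + 2) by
      rw [show (0 : ZMod k) + 2 = 2 by ring]; exact hc) hdadj
end
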